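/- arXiv:2601.07938 — 5 statements merged into one kernel-verified Lean document; each statement's English description precedes it below -/
import Mathlib

section
/- The number of rooted forests on vertex set {1,...,n} whose set of roots is exactly {1,...,k} equals k · n^(n-k-1), for 1 ≤ k ≤ n. -/
/-- A parent map encoding of a rooted forest on `Fin n`: every vertex reaches a
fixed point (a root) by iteration. -/
def IsForestFun {n : ℕ} (f : Fin n → Fin n) : Prop :=
  ∀ v, ∃ k, f (f^[k] v) = f^[k] v

namespace ForestAux

variable {n : ℕ}

open Classical in
/-- depth: number of steps until `v` reaches a fixed point of `f`. -/
noncomputable def dep (f : Fin n → Fin n) (v : Fin n) : ℕ :=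
  if h : ∃ m, f (f^[m] v) = f^[m] v then Nat.find h else 0

lemma dep_spec {f : Fin n → Fin n} {v : Fin n} (h : ∃ m, f (f^[m] v) = f^[m] v) :
    f (f^[dep f v] v) = f^[dep f v] v := by
  rw [dep, dif_pos h]; exact Nat.find_spec h

lemma dep_min {f : Fin n → Fin n} {v : Fin n} {i : ℕ} (hi : i < dep f v) :
    f (f^[i] v) ≠ f^[i] v := by
  by_cases h : ∃ m, f (f^[m] v) = f^[m] v
  · rw [dep, dif_pos h] at hi; exact Nat.find_min h hi
  · rw [dep, dif_neg h] at hi; omega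

lemma dep_eq_zero {f : Fin n → Fin n} {v : Fin n} (h : ¬ ∃ m, f (f^[m] v) = f^[m] v) :
    dep f v = 0 := by rw [dep, dif_neg h]

lemma iter_stab {f : Fin n → Fin n} {v : Fin n} (h : ∃ m, f (f^[m] v) = f^[m] v)
    {s : ℕ} (hs : dep f v ≤ s) : f^[s] v = f^[dep f v] v := by
  obtain ⟨t, rfl⟩ := Nat.exists_eq_add_of_le hs
  rw [Nat.add_comm, Function.iterate_add_apply]
  exact Function.iterate_fixed (dep_spec h) t

lemma pth_inj {f : Fin n → Fin n} {v : Fin n} {i j : ℕ}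
    (hi : i ≤ dep f v) (hj : j ≤ dep f v) (hij : f^[i] v = f^[j] v) : i = j := by
  by_cases h : ∃ m, f (f^[m] v) = f^[m] v
  · have key : ∀ a b : ℕ, a < b → b ≤ dep f v → f^[a] v = f^[b] v → False := by
      intro a b hab hb heq
      have e1 : f^[dep f v] v = f^[dep f v - b + a] v := by
        have e2 : f^[dep f v] v = f^[dep f v - b] (f^[b] v) := by
          rw [← Function.iterate_add_apply]; congr 1; omega
        rw [e2, ← heq, ← Function.iterate_add_apply]
      have h2 : dep f v - b + a < dep f v := by omega
      have := dep_spec h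
      rw [e1] at this
      exact dep_min h2 this
    rcases lt_trichotomy i j with hlt | he | hlt
    · exact absurd hij (fun hh => key i j hlt hj hh)
    · exact he
    · exact absurd hij.symm (fun hh => key j i hlt hi hh)
  · have := dep_eq_zero h; omega

noncomputable def pathSet (f : Fin n → Fin n) (v : Fin n) : Finset (Fin n) :=
  (Finset.range (dep f v)).image (fun i => f^[i] v)

lemma card_pathSet (f : Fin n → Fin n) (v : Fin n) : (pathSet f v).card = dep f v := by
  rw [pathSet, Finset.card_image_of_injOn, Finset.card_range]
  intro i hi j hj hij
  exact pth_inj (le_of_lt (Finset.mem_range.1 hi)) (le_of_lt (Finset.mem_range.1 hj)) hij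

lemma mem_pathSet {f : Fin n → Fin n} {v x : Fin n} :
    x ∈ pathSet f v ↔ ∃ i < dep f v, f^[i] v = x := by
  simp [pathSet]

/-- the path enumeration as an equiv. -/
noncomputable def pE (f : Fin n → Fin n) (v : Fin n) : Fin (dep f v) ≃ pathSet f v :=
  Equiv.ofBijective
    (fun i => ⟨f^[(i : ℕ)] v, mem_pathSet.2 ⟨i, i.isLt, rfl⟩⟩)
    (by
      rw [Fintype.bijective_iff_injective_and_card]
      constructor
      · intro i j hij
        exact Fin.ext (pth_inj (le_of_lt i.isLt) (le_of_lt j.isLt)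
          (congrArg Subtype.val hij))
      · simp [card_pathSet])

lemma pE_coe (f : Fin n → Fin n) (v : Fin n) (i : Fin (dep f v)) :
    (pE f v i : Fin n) = f^[(i : ℕ)] v := rfl

/-- the sorted enumeration of the path set. -/
noncomputable def pathOrd (f : Fin n → Fin n) (v : Fin n) : Fin (dep f v) ≃o pathSet f v :=
  (pathSet f v).orderIsoOfFin (card_pathSet f v)

/-- the modified function of the forward map. -/
noncomputable def phiG (f : Fin n → Fin n) (v : Fin n) : Fin n → Fin n := fun x =>
  if hx : x ∈ pathSet f v then ↑(pE f v ((pathOrd f v).symm ⟨x, hx⟩)) else f x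

noncomputable def rt (f : Fin n → Fin n) (v : Fin n) : Fin n := f^[dep f v] v

lemma phiG_mem {f : Fin n → Fin n} {v x : Fin n} (hx : x ∈ pathSet f v) :
    phiG f v x = ↑(pE f v ((pathOrd f v).symm ⟨x, hx⟩)) := dif_pos hx

lemma phiG_nmem {f : Fin n → Fin n} {v x : Fin n} (hx : x ∉ pathSet f v) :
    phiG f v x = f x := dif_neg hx

open Classical in
noncomputable def cyc (k : ℕ) (G : Fin n → Fin n) : Finset (Fin n) :=
  Finset.univ.filter (fun x => (∃ t, 0 < t ∧ G^[t] x = x) ∧ ∀ t, k ≤ ((G^[t] x : Fin n) : ℕ))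

-- placeholders from dev2 (assume compiled): re-proved quickly
lemma mem_cyc {k : ℕ} {G : Fin n → Fin n} {x : Fin n} :
    x ∈ cyc k G ↔ (∃ t, 0 < t ∧ G^[t] x = x) ∧ ∀ t, k ≤ ((G^[t] x : Fin n) : ℕ) := by
  classical
  simp [cyc]

lemma cyc_nonroot {k : ℕ} {G : Fin n → Fin n} {x : Fin n} (hx : x ∈ cyc k G) :
    k ≤ (x : ℕ) := by
  have := (mem_cyc.1 hx).2 0
  simpa using this

lemma cyc_inv {k : ℕ} {G : Fin n → Fin n} {x : Fin n} (hx : x ∈ cyc k G) :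
    G x ∈ cyc k G := by
  obtain ⟨⟨t, ht, hper⟩, horb⟩ := mem_cyc.1 hx
  refine mem_cyc.2 ⟨⟨t, ht, ?_⟩, fun s => ?_⟩
  · rw [← Function.iterate_succ_apply, Function.iterate_succ_apply', hper]
  · have := horb (s + 1)
    rwa [Function.iterate_succ_apply] at this

lemma cyc_injOn {k : ℕ} {G : Fin n → Fin n} {a b : Fin n} (ha : a ∈ cyc k G)
    (hb : b ∈ cyc k G) (hab : G a = G b) : a = b := by
  obtain ⟨⟨ta, hta, hpa⟩, _⟩ := mem_cyc.1 ha
  obtain ⟨⟨tb, htb, hpb⟩, _⟩ := mem_cyc.1 hb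
  have hA : G^[ta * tb] a = a :=
    (Function.IsPeriodicPt.mul_const (hpa : Function.IsPeriodicPt G ta a) tb :)
  have hB : G^[ta * tb] b = b :=
    (Function.IsPeriodicPt.const_mul (hpb : Function.IsPeriodicPt G tb b) ta :)
  have hpos : 0 < ta * tb := Nat.mul_pos hta htb
  have h1 : G^[ta * tb - 1] (G a) = G^[ta * tb - 1] (G b) := by rw [hab]
  rw [← Function.iterate_succ_apply, ← Function.iterate_succ_apply] at h1
  have e : (ta * tb - 1).succ = ta * tb := by omega
  rw [e, hA, hB] at h1
  exact h1

noncomputable def cycPerm (k : ℕ) (G : Fin n → Fin n) : cyc k G ≃ cyc k G :=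
  Equiv.ofBijective (fun z => ⟨G z, cyc_inv z.2⟩)
    ((Finite.injective_iff_bijective).1 (fun a b hab =>
      Subtype.ext (cyc_injOn a.2 b.2 (congrArg Subtype.val hab))))

noncomputable def cycOrd (k : ℕ) (G : Fin n → Fin n) : Fin (cyc k G).card ≃o cyc k G :=
  (cyc k G).orderIsoOfFin rfl

noncomputable def cycP (k : ℕ) (G : Fin n → Fin n) : Fin (cyc k G).card ≃ cyc k G :=
  (cycOrd k G).toEquiv.trans (cycPerm k G)

lemma cycP_coe (k : ℕ) (G : Fin n → Fin n) (i : Fin (cyc k G).card) :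
    (cycP k G i : Fin n) = G ↑(cycOrd k G i) := rfl

noncomputable def psiF (k : ℕ) (r : Fin n) (G : Fin n → Fin n) : Fin n → Fin n := fun x =>
  if hx : x ∈ cyc k G then
    if h : (((cycP k G).symm ⟨x, hx⟩ : Fin _) : ℕ) + 1 < (cyc k G).card then
      ↑(cycP k G ⟨(((cycP k G).symm ⟨x, hx⟩ : Fin _) : ℕ) + 1, h⟩)
    else r
  else G x

noncomputable def psiV (k : ℕ) (r : Fin n) (G : Fin n → Fin n) : Fin n :=
  if h : 0 < (cyc k G).card then ↑(cycP k G ⟨0, h⟩) else r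

-- new material
lemma psiF_nmem {k : ℕ} {r : Fin n} {G : Fin n → Fin n} {x : Fin n}
    (hx : x ∉ cyc k G) : psiF k r G x = G x := dif_neg hx

lemma psiF_cycP (k : ℕ) (r : Fin n) (G : Fin n → Fin n) (i : Fin (cyc k G).card) :
    psiF k r G ↑(cycP k G i) =
      if h : (i : ℕ) + 1 < (cyc k G).card then ↑(cycP k G ⟨(i : ℕ) + 1, h⟩) else r := by
  have hm : (cycP k G i : Fin n) ∈ cyc k G := (cycP k G i).2
  simp only [psiF, dif_pos hm]
  have he : (⟨↑(cycP k G i), hm⟩ : {x // x ∈ cyc k G}) = cycP k G i := Subtype.ext rfl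
  rw [he, Equiv.symm_apply_apply]

lemma psiF_root {k : ℕ} {r : Fin n} {G : Fin n → Fin n}
    (hG : ∀ x : Fin n, (x : ℕ) < k → G x = x) {x : Fin n} (hx : (x : ℕ) < k) :
    psiF k r G x = x := by
  have hnx : x ∉ cyc k G := fun hc => absurd (cyc_nonroot hc) (by omega)
  rw [psiF_nmem hnx, hG x hx]

lemma iter_psiV (k : ℕ) (r : Fin n) (G : Fin n → Fin n) :
    ∀ (i : ℕ) (h : i < (cyc k G).card),
      (psiF k r G)^[i] (psiV k r G) = ↑(cycP k G ⟨i, h⟩) := by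
  intro i
  induction i with
  | zero =>
    intro h
    simp only [Function.iterate_zero, id_eq, psiV, dif_pos h]
  | succ m ih =>
    intro h
    have hm : m < (cyc k G).card := by omega
    rw [Function.iterate_succ_apply', ih hm, psiF_cycP, dif_pos h]

lemma iter_psiV_last (k : ℕ) (r : Fin n) (G : Fin n → Fin n) :
    (psiF k r G)^[(cyc k G).card] (psiV k r G) = r := by
  rcases Nat.eq_zero_or_pos (cyc k G).card with h0 | h0
  · rw [h0]
    simp only [Function.iterate_zero, id_eq, psiV, dif_neg (by omega : ¬ 0 < (cyc k G).card)]
  · obtain ⟨m, hm⟩ : ∃ m, (cyc k G).card = m + 1 := ⟨(cyc k G).card - 1, by omega⟩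
    rw [hm, Function.iterate_succ_apply', iter_psiV k r G m (by omega), psiF_cycP]
    rw [dif_neg (by simp only [Fin.val_mk]; omega)]

lemma cyc_reach (k : ℕ) (r : Fin n) (G : Fin n → Fin n) {z : Fin n} (hz : z ∈ cyc k G) :
    ∃ t, (psiF k r G)^[t] z = r := by
  set i := (cycP k G).symm ⟨z, hz⟩ with hi
  have hzi : ↑(cycP k G i) = z := by rw [hi, Equiv.apply_symm_apply]
  refine ⟨(cyc k G).card - (i : ℕ), ?_⟩
  have h1 : (psiF k r G)^[(i : ℕ)] (psiV k r G) = z := by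
    rw [iter_psiV k r G (i : ℕ) i.isLt, Fin.eta, hzi]
  have h2 : (cyc k G).card - (i : ℕ) + (i : ℕ) = (cyc k G).card := by
    have := i.isLt; omega
  calc (psiF k r G)^[(cyc k G).card - (i : ℕ)] z
      = (psiF k r G)^[(cyc k G).card - (i : ℕ)] ((psiF k r G)^[(i : ℕ)] (psiV k r G)) := by
        rw [h1]
    _ = (psiF k r G)^[(cyc k G).card] (psiV k r G) := by
        rw [← Function.iterate_add_apply, h2]
    _ = r := iter_psiV_last k r G

lemma exists_periodic (G : Fin n → Fin n) (hn : 0 < n) (x : Fin n) :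
    ∃ s t, 0 < t ∧ G^[t] (G^[s] x) = G^[s] x := by
  obtain ⟨i, j, hij, he⟩ := Finite.exists_ne_map_eq_of_infinite (fun i : ℕ => G^[i] x)
  rcases Nat.lt_or_ge i j with h | h
  · exact ⟨i, j - i, by omega, by
      rw [← Function.iterate_add_apply]
      have : j - i + i = j := by omega
      rw [this]; exact he.symm⟩
  · have hji : j < i := by omega
    exact ⟨j, i - j, by omega, by
      rw [← Function.iterate_add_apply]
      have : i - j + j = i := by omega
      rw [this]; exact he⟩

lemma periodic_class {k : ℕ} {G : Fin n → Fin n}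
    (hG : ∀ x : Fin n, (x : ℕ) < k → G x = x) {y : Fin n} {t : ℕ} (ht : 0 < t)
    (hy : G^[t] y = y) : (y : ℕ) < k ∨ y ∈ cyc k G := by
  by_cases hroot : (y : ℕ) < k
  · exact Or.inl hroot
  · right
    refine mem_cyc.2 ⟨⟨t, ht, hy⟩, fun s => ?_⟩
    by_contra hs
    push_neg at hs
    set w := G^[s] y with hw
    have hGw : G w = w := hG w hs
    have hT : G^[t * (s + 1)] y = y :=
      (Function.IsPeriodicPt.mul_const (hy : Function.IsPeriodicPt G t y) (s + 1) :)
    have hTs : s ≤ t * (s + 1) := by nlinarith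
    have : y = w := by
      have e1 : G^[t * (s + 1)] y = G^[t * (s + 1) - s] (G^[s] y) := by
        rw [← Function.iterate_add_apply]
        congr 1
        omega
      rw [← hw, Function.iterate_fixed hGw] at e1
      rw [← hT, e1]
    rw [this] at hroot
    exact hroot hs

lemma psiF_forest {k : ℕ} {r : Fin n} {G : Fin n → Fin n} (hn : 0 < n)
    (hr : (r : ℕ) < k) (hG : ∀ x : Fin n, (x : ℕ) < k → G x = x) (x : Fin n) :
    ∃ m, psiF k r G ((psiF k r G)^[m] x) = (psiF k r G)^[m] x := by
  classical
  have hQ : ∃ t, ((G^[t] x : Fin n) : ℕ) < k ∨ G^[t] x ∈ cyc k G := by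
    obtain ⟨s, t, ht, hper⟩ := exists_periodic G hn x
    exact ⟨s, periodic_class hG ht hper⟩
  set t0 := Nat.find hQ with ht0
  have hQt0 := Nat.find_spec hQ
  have track : ∀ s, s ≤ t0 → (psiF k r G)^[s] x = G^[s] x := by
    intro s
    induction s with
    | zero => intro _; rfl
    | succ m ih =>
      intro hs
      have hm : m < t0 := by omega
      have hnQ := Nat.find_min hQ hm
      push_neg at hnQ
      rw [Function.iterate_succ_apply', ih (by omega), psiF_nmem hnQ.2]
      exact (Function.iterate_succ_apply' G m x).symm
  rcases hQt0 with hroot | hcyc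
  · refine ⟨t0, ?_⟩
    rw [track t0 le_rfl]
    exact psiF_root hG hroot
  · obtain ⟨t, htr⟩ := cyc_reach k r G hcyc
    refine ⟨t0 + t, ?_⟩
    have : (psiF k r G)^[t0 + t] x = r := by
      rw [Nat.add_comm, Function.iterate_add_apply, track t0 le_rfl, htr]
    rw [this]
    exact psiF_root hG hr

lemma psiF_fix_iff {k : ℕ} {r : Fin n} {G : Fin n → Fin n}
    (hr : (r : ℕ) < k) (hG : ∀ x : Fin n, (x : ℕ) < k → G x = x) (x : Fin n) :
    psiF k r G x = x ↔ (x : ℕ) < k := by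
  constructor
  · intro hx
    by_contra hroot
    by_cases hc : x ∈ cyc k G
    · set i := (cycP k G).symm ⟨x, hc⟩ with hi
      have hxi : ↑(cycP k G i) = x := by rw [hi, Equiv.apply_symm_apply]
      rw [← hxi, psiF_cycP] at hx
      by_cases h1 : (i : ℕ) + 1 < (cyc k G).card
      · rw [dif_pos h1] at hx
        have : cycP k G ⟨(i : ℕ) + 1, h1⟩ = cycP k G i := Subtype.ext hx
        have := (cycP k G).injective this
        have : (i : ℕ) + 1 = (i : ℕ) := congrArg Fin.val this
        omega
      · rw [dif_neg h1] at hx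
        have hxr : x = r := by rw [← hxi, ← hx]
        rw [hxr] at hroot
        exact hroot hr
    · rw [psiF_nmem hc] at hx
      refine hc (mem_cyc.2 ⟨⟨1, one_pos, by simpa using hx⟩, fun s => ?_⟩)
      rw [Function.iterate_fixed hx s]
      omega
  · exact fun h => psiF_root hG h


def extG (k : ℕ) (gB : {x : Fin n // ¬ (x : ℕ) < k} → Fin n) : Fin n → Fin n := fun x =>
  if h : (x : ℕ) < k then x else gB ⟨x, h⟩

lemma extG_root {k : ℕ} {gB : {x : Fin n // ¬ (x : ℕ) < k} → Fin n} {x : Fin n}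
    (hx : (x : ℕ) < k) : extG k gB x = x := dif_pos hx

lemma extG_nonroot {k : ℕ} {gB : {x : Fin n // ¬ (x : ℕ) < k} → Fin n} {x : Fin n}
    (hx : ¬ (x : ℕ) < k) : extG k gB x = gB ⟨x, hx⟩ := dif_neg hx

lemma dep_eq {f : Fin n → Fin n} {v : Fin n} {d : ℕ}
    (hd : f (f^[d] v) = f^[d] v) (hmin : ∀ i < d, f (f^[i] v) ≠ f^[i] v) :
    dep f v = d := by
  have h : ∃ m, f (f^[m] v) = f^[m] v := ⟨d, hd⟩
  rw [dep, dif_pos h, Nat.find_eq_iff]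
  exact ⟨hd, fun i hi => hmin i hi⟩

lemma ordIso_congr {S₁ S₂ : Finset (Fin n)} (hS : S₁ = S₂) {m₁ m₂ : ℕ}
    (h₁ : S₁.card = m₁) (h₂ : S₂.card = m₂) (i₁ : Fin m₁) (i₂ : Fin m₂)
    (hi : (i₁ : ℕ) = (i₂ : ℕ)) :
    (↑(S₁.orderIsoOfFin h₁ i₁) : Fin n) = ↑(S₂.orderIsoOfFin h₂ i₂) := by
  subst hS
  subst h₁
  subst h₂
  rw [Fin.ext hi]

section RSeries

variable {k : ℕ} {r : Fin n} {G : Fin n → Fin n}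

/-- dep of the reconstructed forest equals the cycle count. -/
lemma dep_psi (hr : (r : ℕ) < k) (hG : ∀ x : Fin n, (x : ℕ) < k → G x = x) : dep (psiF k r G) (psiV k r G) = (cyc k G).card := by
  apply dep_eq
  · rw [iter_psiV_last]
    exact psiF_root hG hr
  · intro i hi
    rw [iter_psiV k r G i hi]
    intro hfix
    have := (psiF_fix_iff hr hG _).1 hfix
    have h2 := cyc_nonroot (cycP k G ⟨i, hi⟩).2
    omega

lemma rt_psi (hr : (r : ℕ) < k) (hG : ∀ x : Fin n, (x : ℕ) < k → G x = x) : rt (psiF k r G) (psiV k r G) = r := by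
  rw [rt, dep_psi hr hG, iter_psiV_last]

lemma pathSet_psi (hr : (r : ℕ) < k) (hG : ∀ x : Fin n, (x : ℕ) < k → G x = x) : pathSet (psiF k r G) (psiV k r G) = cyc k G := by
  ext x
  rw [mem_pathSet, dep_psi hr hG]
  constructor
  · rintro ⟨i, hi, rfl⟩
    rw [iter_psiV k r G i hi]
    exact (cycP k G ⟨i, hi⟩).2
  · intro hx
    refine ⟨(cycP k G).symm ⟨x, hx⟩, ((cycP k G).symm ⟨x, hx⟩).isLt, ?_⟩
    rw [iter_psiV k r G _ ((cycP k G).symm ⟨x, hx⟩).isLt, Fin.eta,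
      Equiv.apply_symm_apply]

lemma phiG_psi (hr : (r : ℕ) < k) (hG : ∀ x : Fin n, (x : ℕ) < k → G x = x) (x : Fin n) : phiG (psiF k r G) (psiV k r G) x = G x := by
  by_cases hx : x ∈ pathSet (psiF k r G) (psiV k r G)
  · set j := (pathOrd (psiF k r G) (psiV k r G)).symm ⟨x, hx⟩ with hj
    have hj2 : (j : ℕ) < (cyc k G).card :=
      lt_of_lt_of_le j.isLt (le_of_eq (dep_psi hr hG))
    have e1 : phiG (psiF k r G) (psiV k r G) x = (psiF k r G)^[(j : ℕ)] (psiV k r G) := by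
      rw [phiG_mem hx, pE_coe]
    rw [e1, iter_psiV k r G _ hj2, cycP_coe]
    congr 1
    have e2 : (↑(cycOrd k G ⟨(j : ℕ), hj2⟩) : Fin n)
        = ↑(pathOrd (psiF k r G) (psiV k r G) j) := by
      apply ordIso_congr (pathSet_psi hr hG).symm
      rfl
    rw [e2, hj, OrderIso.apply_symm_apply]
  · have hnc : x ∉ cyc k G := by rwa [pathSet_psi hr hG] at hx
    rw [phiG_nmem hx, psiF_nmem hnc]

end RSeries


section QSeries

variable {k : ℕ} {f : Fin n → Fin n} {v : Fin n}

lemma pathSet_nonroot (hfix : ∀ x : Fin n, f x = x ↔ (x : ℕ) < k) {x : Fin n}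
    (hx : x ∈ pathSet f v) : ¬ (x : ℕ) < k := by
  obtain ⟨i, hi, rfl⟩ := mem_pathSet.1 hx
  intro h
  exact dep_min hi ((hfix _).2 h)

noncomputable def tau (f : Fin n → Fin n) (v : Fin n) : Equiv.Perm (pathSet f v) :=
  (pathOrd f v).toEquiv.symm.trans (pE f v)

lemma phiG_tau (z : pathSet f v) : phiG f v ↑z = ↑(tau f v z) := by
  rw [phiG_mem z.2]
  rfl

lemma phiG_iter_tau (t : ℕ) (z : pathSet f v) :
    (phiG f v)^[t] ↑z = ↑((tau f v ^ t) z) := by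
  induction t with
  | zero => simp
  | succ m ih =>
    rw [Function.iterate_succ_apply', ih, phiG_tau, pow_succ']
    rfl

lemma pathSet_sub_cyc (hfix : ∀ x : Fin n, f x = x ↔ (x : ℕ) < k) :
    ∀ z ∈ pathSet f v, z ∈ cyc k (phiG f v) := by
  intro z hz
  refine mem_cyc.2 ⟨⟨orderOf (tau f v), orderOf_pos (tau f v), ?_⟩, fun s => ?_⟩
  · have h := phiG_iter_tau (orderOf (tau f v)) ⟨z, hz⟩
    rw [h, pow_orderOf_eq_one]
    rfl
  · have h := phiG_iter_tau s ⟨z, hz⟩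
    rw [h]
    have h2 := pathSet_nonroot (v := v) hfix ((tau f v ^ s) ⟨z, hz⟩).2
    omega

lemma cyc_sub_pathSet (hf : ∀ w, ∃ m, f (f^[m] w) = f^[m] w)
    (hfix : ∀ x : Fin n, f x = x ↔ (x : ℕ) < k) :
    ∀ x ∈ cyc k (phiG f v), x ∈ pathSet f v := by
  intro x hx
  obtain ⟨⟨p, hp, hper⟩, horb⟩ := mem_cyc.1 hx
  by_contra hnx
  have claim : ∀ s, (phiG f v)^[s] x ∉ pathSet f v := by
    by_contra hcon
    push_neg at hcon
    obtain ⟨s₀, hs₀⟩ := hcon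
    have inv : ∀ d, (phiG f v)^[s₀ + d] x ∈ pathSet f v := by
      intro d
      induction d with
      | zero => simpa using hs₀
      | succ m ih =>
        have e : (phiG f v)^[s₀ + (m + 1)] x = phiG f v ((phiG f v)^[s₀ + m] x) := by
          have e2 : s₀ + (m + 1) = (s₀ + m) + 1 := by omega
          rw [e2, Function.iterate_succ_apply']
        rw [e, phiG_tau ⟨_, ih⟩]
        exact ((tau f v) ⟨_, ih⟩).2
    have hT : (phiG f v)^[p * (s₀ + 1)] x = x :=
      (Function.IsPeriodicPt.mul_const (hper : Function.IsPeriodicPt _ p x) (s₀ + 1) :)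
    have hTs : s₀ ≤ p * (s₀ + 1) := by nlinarith
    have hmem : (phiG f v)^[p * (s₀ + 1)] x ∈ pathSet f v := by
      have h3 := inv (p * (s₀ + 1) - s₀)
      have e3 : s₀ + (p * (s₀ + 1) - s₀) = p * (s₀ + 1) := by omega
      rwa [e3] at h3
    rw [hT] at hmem
    exact hnx hmem
  have track : ∀ s, (phiG f v)^[s] x = f^[s] x := by
    intro s
    induction s with
    | zero => rfl
    | succ m ih =>
      have hcm := claim m
      rw [ih] at hcm
      rw [Function.iterate_succ_apply', ih, phiG_nmem hcm]
      exact (Function.iterate_succ_apply' f m x).symm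
  have hfp : f^[p] x = x := by rw [← track, hper]
  have hx' := hf x
  have hT2 : f^[p * (dep f x + 1)] x = x :=
    (Function.IsPeriodicPt.mul_const (hfp : Function.IsPeriodicPt f p x) (dep f x + 1) :)
  have hds : dep f x ≤ p * (dep f x + 1) := by nlinarith
  have hst : f^[p * (dep f x + 1)] x = f^[dep f x] x := iter_stab hx' hds
  have hxd : x = f^[dep f x] x := by
    conv_lhs => rw [← hT2]
    exact hst
  have hfixx : f x = x := by
    conv_lhs => rw [hxd]
    rw [dep_spec hx', ← hxd]
  have h4 := (hfix x).1 hfixx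
  have h5 := horb 0
  simp only [Function.iterate_zero, id_eq] at h5
  omega

lemma cyc_phiG (hf : ∀ w, ∃ m, f (f^[m] w) = f^[m] w)
    (hfix : ∀ x : Fin n, f x = x ↔ (x : ℕ) < k) :
    cyc k (phiG f v) = pathSet f v :=
  Finset.ext fun x =>
    ⟨fun h => cyc_sub_pathSet hf hfix x h, fun h => pathSet_sub_cyc hfix x h⟩

lemma cycP_phiG (hf : ∀ w, ∃ m, f (f^[m] w) = f^[m] w)
    (hfix : ∀ x : Fin n, f x = x ↔ (x : ℕ) < k)
    (i : Fin (cyc k (phiG f v)).card) :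
    ↑(cycP k (phiG f v) i) = f^[(i : ℕ)] v := by
  have hcard : (cyc k (phiG f v)).card = dep f v := by
    rw [cyc_phiG hf hfix, card_pathSet]
  have hic : (i : ℕ) < dep f v := lt_of_lt_of_le i.isLt (le_of_eq hcard)
  rw [cycP_coe]
  have e2 : (↑(cycOrd k (phiG f v) i) : Fin n) = ↑(pathOrd f v ⟨(i : ℕ), hic⟩) := by
    apply ordIso_congr (cyc_phiG hf hfix)
    rfl
  rw [e2]
  have hmem := (pathOrd f v ⟨(i : ℕ), hic⟩).2
  rw [phiG_mem hmem, pE_coe]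
  congr 1
  have e3 : (⟨↑(pathOrd f v ⟨(i : ℕ), hic⟩), hmem⟩ : {y // y ∈ pathSet f v})
      = pathOrd f v ⟨(i : ℕ), hic⟩ := Subtype.ext rfl
  rw [e3, OrderIso.symm_apply_apply]

lemma psiF_phiG (hf : ∀ w, ∃ m, f (f^[m] w) = f^[m] w)
    (hfix : ∀ x : Fin n, f x = x ↔ (x : ℕ) < k) (x : Fin n) :
    psiF k (rt f v) (phiG f v) x = f x := by
  by_cases hx : x ∈ pathSet f v
  · have hc : x ∈ cyc k (phiG f v) := by rw [cyc_phiG hf hfix]; exact hx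
    obtain ⟨i, hi, hfi⟩ := mem_pathSet.1 hx
    have hcard : (cyc k (phiG f v)).card = dep f v := by
      rw [cyc_phiG hf hfix, card_pathSet]
    have hival : (((cycP k (phiG f v)).symm ⟨x, hc⟩ : Fin _) : ℕ) = i := by
      apply pth_inj (le_of_lt (lt_of_lt_of_le (Fin.isLt _) (le_of_eq hcard)))
        (le_of_lt hi)
      have e := cycP_phiG hf hfix ((cycP k (phiG f v)).symm ⟨x, hc⟩)
      rw [Equiv.apply_symm_apply] at e
      rw [← e, hfi]
    simp only [psiF]
    rw [dif_pos hc]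
    split
    · rename_i h1
      rw [cycP_phiG hf hfix]
      show f^[(((cycP k (phiG f v)).symm ⟨x, hc⟩ : Fin _) : ℕ) + 1] v = f x
      rw [hival, ← hfi]
      exact Function.iterate_succ_apply' f i v
    · rename_i h1
      have h1' : ¬ (i + 1 < dep f v) := by
        rw [← hival, ← hcard]
        exact h1
      have hieq : i + 1 = dep f v := by omega
      rw [rt, ← hieq, Function.iterate_succ_apply', hfi]
  · have hnc : x ∉ cyc k (phiG f v) := by rw [cyc_phiG hf hfix]; exact hx
    rw [psiF_nmem hnc, phiG_nmem hx]

lemma psiV_phiG (hf : ∀ w, ∃ m, f (f^[m] w) = f^[m] w)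
    (hfix : ∀ x : Fin n, f x = x ↔ (x : ℕ) < k) :
    psiV k (rt f v) (phiG f v) = v := by
  rcases Nat.eq_zero_or_pos (dep f v) with h0 | h0
  · have hc0 : (cyc k (phiG f v)).card = 0 := by
      rw [cyc_phiG hf hfix, card_pathSet, h0]
    rw [psiV, dif_neg (by omega), rt, h0]
    rfl
  · have hcpos : 0 < (cyc k (phiG f v)).card := by
      rw [cyc_phiG hf hfix, card_pathSet]
      exact h0
    rw [psiV, dif_pos hcpos, cycP_phiG hf hfix]
    rfl

lemma extG_phiG (hfix : ∀ x : Fin n, f x = x ↔ (x : ℕ) < k) :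
    extG k (fun b : {x : Fin n // ¬ (x : ℕ) < k} => phiG f v ↑b) = phiG f v := by
  funext x
  by_cases hx : (x : ℕ) < k
  · rw [extG_root hx]
    by_cases hp : x ∈ pathSet f v
    · exact absurd hx (pathSet_nonroot hfix hp)
    · rw [phiG_nmem hp, (hfix x).2 hx]
  · rw [extG_nonroot hx]

end QSeries


noncomputable def mainEquiv (k : ℕ) (hkn : k ≤ n) :
    ({f : Fin n → Fin n // IsForestFun f ∧ ∀ x, f x = x ↔ (x : ℕ) < k} × Fin n)
      ≃ (Fin k × ({x : Fin n // ¬ (x : ℕ) < k} → Fin n)) where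
  toFun p :=
    (⟨(rt p.1.1 p.2 : Fin n).val, by
        have h := p.1.2.1 p.2
        have hfixr : p.1.1 (rt p.1.1 p.2) = rt p.1.1 p.2 := dep_spec h
        exact (p.1.2.2 _).1 hfixr⟩,
     fun b => phiG p.1.1 p.2 ↑b)
  invFun q :=
    (⟨psiF k ⟨(q.1 : ℕ), lt_of_lt_of_le q.1.isLt hkn⟩ (extG k q.2),
      psiF_forest (lt_of_le_of_lt (Nat.zero_le _) (lt_of_lt_of_le q.1.isLt hkn))
        q.1.isLt (fun x hx => extG_root hx),
      psiF_fix_iff q.1.isLt (fun x hx => extG_root hx)⟩,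
     psiV k ⟨(q.1 : ℕ), lt_of_lt_of_le q.1.isLt hkn⟩ (extG k q.2))
  left_inv := by
    rintro ⟨⟨f, hf, hfix⟩, v⟩
    have hE : extG k (fun b : {x : Fin n // ¬ (x : ℕ) < k} => phiG f v ↑b)
        = phiG f v := extG_phiG hfix
    refine Prod.ext (Subtype.ext ?_) ?_
    · show psiF k (rt f v) (extG k fun b => phiG f v ↑b) = f
      rw [hE]
      funext x
      exact psiF_phiG hf hfix x
    · show psiV k (rt f v) (extG k fun b => phiG f v ↑b) = v
      rw [hE]
      exact psiV_phiG hf hfix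
  right_inv := by
    rintro ⟨r, gB⟩
    have hr' : ((⟨(r : ℕ), lt_of_lt_of_le r.isLt hkn⟩ : Fin n) : ℕ) < k := r.isLt
    have hG : ∀ x : Fin n, (x : ℕ) < k → extG k gB x = x := fun x hx => extG_root hx
    refine Prod.ext ?_ ?_
    · apply Fin.ext
      show ((rt (psiF k _ (extG k gB)) (psiV k _ (extG k gB)) : Fin n) : ℕ) = (r : ℕ)
      rw [rt_psi hr' hG]
    · funext b
      show phiG (psiF k _ (extG k gB)) (psiV k _ (extG k gB)) ↑b = gB b
      rw [phiG_psi hr' hG, extG_nonroot b.2]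

end ForestAux

def nonrootEquiv (n k : ℕ) (hkn : k ≤ n) : {x : Fin n // ¬ (x : ℕ) < k} ≃ Fin (n - k) where
  toFun x := ⟨(x : Fin n).val - k, by have h1 := (x : Fin n).isLt; have h2 := x.2; omega⟩
  invFun j := ⟨⟨(j : ℕ) + k, by have := j.isLt; omega⟩, by simp⟩
  left_inv x := by
    have h2 := x.2
    apply Subtype.ext
    apply Fin.ext
    simp only [Fin.val_mk]
    omega
  right_inv j := by
    apply Fin.ext
    simp


/-- The number of rooted forests on `{1,…,n}` whose set of roots is exactly
`{1,…,k}` is `k·n^(n-k-1)` (stated multiplied through by `n`). -/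
theorem stmt1 (n k : ℕ) (hk : 1 ≤ k) (hkn : k ≤ n) :
    Nat.card {f : Fin n → Fin n // IsForestFun f ∧ ∀ v, f v = v ↔ (v : ℕ) < k} * n =
      k * n ^ (n - k) := by
  classical
  have h1 := Nat.card_congr (ForestAux.mainEquiv (n := n) k hkn)
  rw [Nat.card_prod, Nat.card_prod] at h1
  have e2 := nonrootEquiv n k hkn
  have hB : Nat.card ({x : Fin n // ¬ (x : ℕ) < k} → Fin n) = n ^ (n - k) := by
    rw [Nat.card_congr (Equiv.arrowCongr e2 (Equiv.refl (Fin n))),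
      Nat.card_eq_fintype_card, Fintype.card_fun, Fintype.card_fin, Fintype.card_fin]
  rw [hB] at h1
  simp only [Nat.card_eq_fintype_card, Fintype.card_fin] at h1
  simp only [Nat.card_eq_fintype_card]
  exact h1
end

section
/- The number of rooted labeled trees of order n with a distinguished record at height k-1 equals the number of connected endofunctions on {1,...,n} of girth k. -/
set_option linter.unusedSectionVars false



/-- Parent map encoding of a rooted labeled tree on `Fin n`. -/
def IsTreeFun {n : ℕ} (f : Fin n → Fin n) : Prop :=
  ∃ r, f r = r ∧ ∀ v, ∃ k, f^[k] v = r

/-- `v` is a record of the tree with parent map `f`. -/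
def IsRec {n : ℕ} (f : Fin n → Fin n) (v : Fin n) : Prop :=
  ∀ k, f^[k] v ≤ v

/-- The height of `v`: the least number of steps to reach the root (a fixed point). -/
noncomputable def ht {n : ℕ} (f : Fin n → Fin n) (v : Fin n) : ℕ :=
  sInf {m | f (f^[m] v) = f^[m] v}

/-- An endofunction is connected if its functional graph is connected (as an
undirected graph): here via the equivalence closure of `a ↦ f a`. -/
def ConnFun {n : ℕ} (f : Fin n → Fin n) : Prop :=
  Nonempty (Fin n) ∧ ∀ i j, Relation.EqvGen (fun a b => f a = b) i j

/-- The girth of a connected endofunction: the length of its unique cycle,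
i.e. the number of periodic points. -/
noncomputable def girth {n : ℕ} (f : Fin n → Fin n) : ℕ :=
  Nat.card {x : Fin n // ∃ m, 0 < m ∧ f^[m] x = x}

namespace Stmt3Aux

variable {n : ℕ}

def Per {n : ℕ} (g : Fin n → Fin n) (x : Fin n) : Prop := ∃ m, 0 < m ∧ g^[m] x = x

lemma girth_eq (g : Fin n → Fin n) : girth g = Nat.card {x : Fin n // Per g x} := rfl

section TreeSide

variable {f : Fin n → Fin n} {r v : Fin n}

lemma fix_unique (hreach : ∀ x, ∃ j, f^[j] x = r) {x : Fin n} (hx : f x = x) : x = r := by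
  obtain ⟨j, hj⟩ := hreach x
  rwa [Function.iterate_fixed hx] at hj

lemma ht_hit (hr : f r = r) (hreach : ∀ x, ∃ j, f^[j] x = r) :
    f^[ht f v] v = r := by
  obtain ⟨j, hj⟩ := hreach v
  have hjmem : j ∈ {m | f (f^[m] v) = f^[m] v} := by
    simp only [Set.mem_setOf_eq, hj, hr]
  have := Nat.sInf_mem (⟨j, hjmem⟩ : {m | f (f^[m] v) = f^[m] v}.Nonempty)
  exact fix_unique hreach this

lemma ht_not_before (hr : f r = r) {i : ℕ} (hi : i < ht f v) : f^[i] v ≠ r := by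
  intro e
  exact Nat.notMem_of_lt_sInf hi (by simp only [Set.mem_setOf_eq, e, hr])

lemma ht_after (hr : f r = r) (hreach : ∀ x, ∃ j, f^[j] x = r) {s : ℕ}
    (hs : ht f v ≤ s) : f^[s] v = r := by
  rw [← Nat.sub_add_cancel hs, Function.iterate_add_apply, ht_hit hr hreach,
    Function.iterate_fixed hr]

lemma per_mul' {g : Fin n → Fin n} {x : Fin n} {m : ℕ} (hx : g^[m] x = x) (t : ℕ) :
    g^[t * m] x = x := by
  induction t with
  | zero => simp
  | succ t ih =>
    have h : (t + 1) * m = t * m + m := by ring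
    rw [h, Function.iterate_add_apply, hx, ih]

lemma per_mod' {g : Fin n → Fin n} {x : Fin n} {m : ℕ} (hx : g^[m] x = x) (u : ℕ) :
    g^[u] x = g^[u % m] x := by
  conv_lhs => rw [← Nat.mod_add_div u m, Function.iterate_add_apply, Nat.mul_comm,
    per_mul' hx _]

lemma path_inj_aux (hr : f r = r) (hreach : ∀ x, ∃ j, f^[j] x = r) {i j : ℕ}
    (hij : i < j) (hj : j ≤ ht f v) (e : f^[i] v = f^[j] v) : False := by
  have hd : 0 < j - i := by omega
  have hper : f^[j - i] (f^[i] v) = f^[i] v := by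
    rw [← Function.iterate_add_apply]
    have h : j - i + i = j := by omega
    rw [h, ← e]
  have h2 : f^[ht f v * (j - i)] (f^[i] v) = f^[i] v := per_mul' hper _
  have h3 : f^[ht f v * (j - i) + i] v = f^[i] v := by
    rw [Function.iterate_add_apply]; exact h2
  have hge : ht f v ≤ ht f v * (j - i) + i := by
    have := Nat.mul_le_mul_left (ht f v) hd
    omega
  have := ht_after (v := v) hr hreach hge
  rw [h3] at this
  exact ht_not_before hr (by omega) this

lemma path_inj (hr : f r = r) (hreach : ∀ x, ∃ j, f^[j] x = r) {i j : ℕ}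
    (hi : i ≤ ht f v) (hj : j ≤ ht f v) (e : f^[i] v = f^[j] v) : i = j := by
  rcases lt_trichotomy i j with h | h | h
  · exact absurd (path_inj_aux hr hreach h hj e) not_false
  · exact h
  · exact absurd (path_inj_aux hr hreach h hi e.symm) not_false

/-- Forward map: redirect the root to `v`. -/
def tw {n : ℕ} (f : Fin n → Fin n) (v : Fin n) : Fin n → Fin n :=
  fun x => if f x = x then v else f x

lemma tw_iter (hr : f r = r) (hreach : ∀ x, ∃ j, f^[j] x = r) {i : ℕ}
    (hi : i ≤ ht f v) : (tw f v)^[i] v = f^[i] v := by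
  induction i with
  | zero => rfl
  | succ i ih =>
    have hi' : i ≤ ht f v := by omega
    rw [Function.iterate_succ_apply', ih hi', Function.iterate_succ_apply']
    have hne : f (f^[i] v) ≠ f^[i] v := fun h =>
      ht_not_before hr (by omega) (fix_unique hreach h)
    simp [tw, hne]

lemma tw_per (hr : f r = r) (hreach : ∀ x, ∃ j, f^[j] x = r) :
    (tw f v)^[ht f v + 1] v = v := by
  rw [Function.iterate_succ_apply', tw_iter hr hreach le_rfl, ht_hit hr hreach]
  simp [tw, hr]

lemma tw_reach_aux (hr : f r = r) :
    ∀ j x, f^[j] x = r → ∃ s, (tw f v)^[s] x = v := by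
  intro j
  induction j with
  | zero =>
    intro x hx
    simp only [Function.iterate_zero, id_eq] at hx
    subst hx
    exact ⟨1, by simp [tw, hr]⟩
  | succ j ih =>
    intro x hx
    by_cases hfx : f x = x
    · exact ⟨1, by simp [tw, hfx]⟩
    · rw [Function.iterate_succ_apply] at hx
      obtain ⟨s, hs⟩ := ih (f x) hx
      refine ⟨s + 1, ?_⟩
      rw [Function.iterate_add_apply]
      simpa [tw, hfx] using hs

lemma tw_reach (hr : f r = r) (hreach : ∀ x, ∃ j, f^[j] x = r) (x : Fin n) :
    ∃ s, (tw f v)^[s] x = v := by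
  obtain ⟨j, hj⟩ := hreach x
  exact tw_reach_aux hr j x hj

lemma tw_per_all (hr : f r = r) (hreach : ∀ x, ∃ j, f^[j] x = r) (i : ℕ) :
    Per (tw f v) ((tw f v)^[i] v) := by
  refine ⟨ht f v + 1, Nat.succ_pos _, ?_⟩
  rw [← Function.iterate_add_apply, Nat.add_comm, Function.iterate_add_apply,
    tw_per hr hreach]

lemma tw_per_subset (hr : f r = r) (hreach : ∀ x, ∃ j, f^[j] x = r) {x : Fin n}
    (hx : Per (tw f v) x) : ∃ i, i ≤ ht f v ∧ x = (tw f v)^[i] v := by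
  obtain ⟨m, hm, hmx⟩ := hx
  obtain ⟨s, hs⟩ := tw_reach (v := v) hr hreach x
  have h1 : (tw f v)^[s * m] x = x := per_mul' hmx s
  have h2 : s * m = (s * m - s) + s := by
    have : s ≤ s * m := Nat.le_mul_of_pos_right s hm
    omega
  have h3 : x = (tw f v)^[s * m - s] v := by
    conv_lhs => rw [← h1, h2, Function.iterate_add_apply, hs]
  refine ⟨(s * m - s) % (ht f v + 1), by
    have := Nat.mod_lt (s * m - s) (show 0 < ht f v + 1 by omega); omega, ?_⟩
  rw [h3, per_mod' (tw_per hr hreach) _]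

end TreeSide

namespace B

lemma per_shift {g : Fin n → Fin n} {x : Fin n} (h : Per g x) (i : ℕ) : Per g (g^[i] x) := by
  obtain ⟨m, hm, hx⟩ := h
  refine ⟨m, hm, ?_⟩
  rw [← Function.iterate_add_apply, Nat.add_comm, Function.iterate_add_apply, hx]

lemma eqvgen_reach {g : Fin n → Fin n} {x y : Fin n}
    (h : Relation.EqvGen (fun a b => g a = b) x y) : ∃ s t, g^[s] x = g^[t] y := by
  induction h with
  | rel a b hab => exact ⟨1, 0, by simpa using hab⟩
  | refl a => exact ⟨0, 0, rfl⟩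
  | symm a b _ ih => obtain ⟨s, t, h⟩ := ih; exact ⟨t, s, h.symm⟩
  | trans a b c _ _ ih1 ih2 =>
    obtain ⟨s, t, h1⟩ := ih1
    obtain ⟨s', t', h2⟩ := ih2
    refine ⟨s' + s, t + t', ?_⟩
    rw [Function.iterate_add_apply, h1, ← Function.iterate_add_apply, Nat.add_comm s' t,
      Function.iterate_add_apply, h2, ← Function.iterate_add_apply]

lemma eqvgen_iterate (g : Fin n → Fin n) (x : Fin n) (s : ℕ) :
    Relation.EqvGen (fun a b => g a = b) x (g^[s] x) := by
  induction s with
  | zero => exact Relation.EqvGen.refl x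
  | succ s ih =>
    refine Relation.EqvGen.trans _ _ _ ih ?_
    rw [Function.iterate_succ_apply']
    exact Relation.EqvGen.rel _ _ rfl

/-- minimal period -/
noncomputable def mp (g : Fin n → Fin n) (v : Fin n) : ℕ := sInf {m | 0 < m ∧ g^[m] v = v}

variable {g : Fin n → Fin n} {v : Fin n} {k : ℕ}

lemma mp_spec (hv : Per g v) : 0 < mp g v ∧ g^[mp g v] v = v := Nat.sInf_mem hv

lemma mp_inj_aux (hv : Per g v) {i j : ℕ} (hij : i < j) (hj : j < mp g v)
    (e : g^[i] v = g^[j] v) : False := by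
  have hmem : (mp g v - j + i) ∈ {m | 0 < m ∧ g^[m] v = v} := by
    constructor
    · omega
    · have h1 : g^[mp g v] v = v := (mp_spec hv).2
      have h2 : mp g v - j + j = mp g v := by omega
      calc g^[mp g v - j + i] v = g^[mp g v - j] (g^[i] v) := Function.iterate_add_apply ..
        _ = g^[mp g v - j] (g^[j] v) := by rw [e]
        _ = g^[mp g v - j + j] v := (Function.iterate_add_apply ..).symm
        _ = v := by rw [h2, h1]
  exact Nat.notMem_of_lt_sInf (show mp g v - j + i < mp g v by omega) hmem

lemma mp_inj (hv : Per g v) {i j : ℕ} (hi : i < mp g v) (hj : j < mp g v)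
    (e : g^[i] v = g^[j] v) : i = j := by
  rcases lt_trichotomy i j with h | h | h
  · exact absurd (mp_inj_aux hv h hj e) not_false
  · exact h
  · exact absurd (mp_inj_aux hv h hi e.symm) not_false

lemma per_orbit (hconn : ∀ i j : Fin n, Relation.EqvGen (fun a b => g a = b) i j)
    (hv : Per g v) {x : Fin n} (hx : Per g x) : ∃ i, i < mp g v ∧ x = g^[i] v := by
  obtain ⟨s, t, hst⟩ := eqvgen_reach (hconn x v)
  obtain ⟨p, hp, hpx⟩ := hx
  have h1 : g^[s * p] x = x := per_mul' hpx s
  have h2 : s * p = (s * p - s) + s := by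
    have : s ≤ s * p := Nat.le_mul_of_pos_right s hp
    omega
  have h3 : x = g^[(s * p - s) + t] v := by
    conv_lhs => rw [← h1, h2, Function.iterate_add_apply, hst, ← Function.iterate_add_apply]
  refine ⟨(s * p - s + t) % mp g v, Nat.mod_lt _ (mp_spec hv).1, ?_⟩
  rw [h3, per_mod' (mp_spec hv).2]

lemma girth_eq_mp (hconn : ∀ i j : Fin n, Relation.EqvGen (fun a b => g a = b) i j)
    (hv : Per g v) : girth g = mp g v := by
  rw [girth_eq]
  have e : Fin (mp g v) ≃ {x : Fin n // Per g x} := by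
    refine Equiv.ofBijective (fun i => ⟨g^[(i : ℕ)] v, per_shift hv _⟩) ⟨?_, ?_⟩
    · intro i j hij
      simp only [Subtype.mk.injEq] at hij
      exact Fin.ext (mp_inj hv i.isLt j.isLt hij)
    · rintro ⟨x, hx⟩
      obtain ⟨i, hi, hxi⟩ := per_orbit hconn hv hx
      exact ⟨⟨i, hi⟩, by simp [hxi]⟩
  rw [← Nat.card_congr e, Nat.card_eq_fintype_card, Fintype.card_fin]

/-- Backward map: cut the cycle at `r` (the cycle predecessor of `v`). -/
def cut {n : ℕ} (g : Fin n → Fin n) (r : Fin n) : Fin n → Fin n :=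
  fun x => if x = r then r else g x

section Cut

variable (hconn : ∀ i j : Fin n, Relation.EqvGen (fun a b => g a = b) i j)
  (hv : Per g v) (hvmax : ∀ x, Per g x → x ≤ v) (hmp : mp g v = k) (hk : 1 ≤ k)

lemma gr (hv : Per g v) (hmp : mp g v = k) (hk : 1 ≤ k) : g (g^[k - 1] v) = v := by
  have h1 : g^[k] v = v := by rw [← hmp]; exact (mp_spec hv).2
  have h2 : k - 1 + 1 = k := by omega
  have h3 := Function.iterate_succ_apply' g (k - 1) v
  rw [Nat.succ_eq_add_one, h2] at h3
  rw [← h3, h1]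

include hconn hv hmp hk in
lemma cut_fix_iff {x : Fin n} : cut g (g^[k - 1] v) x = x ↔ x = g^[k - 1] v := by
  constructor
  · intro hx
    by_cases hxr : x = g^[k - 1] v
    · exact hxr
    · exfalso
      have hgx : g x = x := by simpa [cut, hxr] using hx
      obtain ⟨i, hi, hxi⟩ := per_orbit hconn hv ⟨1, Nat.one_pos, by simpa using hgx⟩
      rw [hmp] at hi
      have hsucc : g^[i + 1] v = g^[i] v := by
        rw [Function.iterate_succ_apply', ← hxi, hgx, hxi]
      rcases Nat.lt_or_ge (i + 1) k with h | h
      · have := mp_inj hv (by rw [hmp]; omega) (by rw [hmp]; omega) hsucc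
        omega
      · have hik : i + 1 = k := by omega
        have hv0 : v = g^[i] v := by
          have : g^[k] v = v := by rw [← hmp]; exact (mp_spec hv).2
          rw [← hik, hsucc] at this
          exact this.symm
        have hi0 : (0 : ℕ) = i := mp_inj hv (by rw [hmp]; omega) (by rw [hmp]; omega) hv0
        have hk1 : k = 1 := by omega
        rw [← hi0] at hxi
        apply hxr
        rw [hk1]
        simpa using hxi
  · intro hx
    simp [cut, hx]

include hv hmp hk in
lemma cut_iter {i : ℕ} (hi : i ≤ k - 1) : (cut g (g^[k - 1] v))^[i] v = g^[i] v := by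
  induction i with
  | zero => rfl
  | succ i ih =>
    have hi' : i ≤ k - 1 := by omega
    rw [Function.iterate_succ_apply', ih hi', Function.iterate_succ_apply']
    have hne : g^[i] v ≠ g^[k - 1] v := by
      intro e
      have := mp_inj hv (by rw [hmp]; omega : i < mp g v) (by rw [hmp]; omega) e
      omega
    simp [cut, hne]

lemma cut_reach_aux (r : Fin n) : ∀ s (x : Fin n), g^[s] x = r → ∃ u, (cut g r)^[u] x = r := by
  intro s
  induction s with
  | zero =>
    intro x hx
    exact ⟨0, hx⟩
  | succ s ih =>
    intro x hx
    by_cases hxr : x = r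
    · exact ⟨0, hxr⟩
    · rw [Function.iterate_succ_apply] at hx
      obtain ⟨u, hu⟩ := ih (g x) hx
      refine ⟨u + 1, ?_⟩
      rw [Function.iterate_add_apply]
      simpa [cut, hxr] using hu

include hconn hv hmp hk in
lemma reach_r (x : Fin n) : ∃ s, g^[s] x = g^[k - 1] v := by
  obtain ⟨s, t, hst⟩ := eqvgen_reach (hconn x v)
  have hper : g^[k] v = v := by rw [← hmp]; exact (mp_spec hv).2
  have h1 : g^[t * k] v = v := per_mul' hper t
  have h2 : (k - 1) + t * k = ((k - 1) + t * k - t) + t := by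
    have : t ≤ t * k := Nat.le_mul_of_pos_right t hk
    omega
  refine ⟨((k - 1) + t * k - t) + s, ?_⟩
  calc g^[((k - 1) + t * k - t) + s] x = g^[(k - 1) + t * k - t] (g^[s] x) :=
        Function.iterate_add_apply ..
    _ = g^[(k - 1) + t * k - t] (g^[t] v) := by rw [hst]
    _ = g^[(k - 1) + t * k] v := by rw [← Function.iterate_add_apply, ← h2]
    _ = g^[k - 1] (g^[t * k] v) := Function.iterate_add_apply ..
    _ = g^[k - 1] v := by rw [h1]

include hconn hv hmp hk in
lemma cut_tree : IsTreeFun (cut g (g^[k - 1] v)) := by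
  refine ⟨g^[k - 1] v, by simp [cut], fun x => ?_⟩
  obtain ⟨s, hs⟩ := reach_r hconn hv hmp hk x
  exact cut_reach_aux _ s x hs

include hconn hv hvmax hmp hk in
lemma cut_rec : IsRec (cut g (g^[k - 1] v)) v := by
  intro j
  rcases le_or_gt j (k - 1) with h | h
  · rw [cut_iter hv hmp hk h]
    exact hvmax _ (per_shift hv j)
  · have hbase : (cut g (g^[k - 1] v))^[k - 1] v = g^[k - 1] v := cut_iter hv hmp hk le_rfl
    have hfix : cut g (g^[k - 1] v) (g^[k - 1] v) = g^[k - 1] v := by simp [cut]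
    have : (cut g (g^[k - 1] v))^[j] v = g^[k - 1] v := by
      rw [show j = (j - (k - 1)) + (k - 1) by omega, Function.iterate_add_apply, hbase,
        Function.iterate_fixed hfix]
    rw [this]
    exact hvmax _ (per_shift hv _)

include hconn hv hmp hk in
lemma cut_ht : ht (cut g (g^[k - 1] v)) v = k - 1 := by
  have hmem : k - 1 ∈ {m | cut g (g^[k - 1] v) ((cut g (g^[k - 1] v))^[m] v)
      = (cut g (g^[k - 1] v))^[m] v} := by
    have hbase : (cut g (g^[k - 1] v))^[k - 1] v = g^[k - 1] v := cut_iter hv hmp hk le_rfl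
    simp only [Set.mem_setOf_eq, hbase]
    simp [cut]
  have hnot : ∀ m < k - 1, m ∉ {m | cut g (g^[k - 1] v) ((cut g (g^[k - 1] v))^[m] v)
      = (cut g (g^[k - 1] v))^[m] v} := by
    intro m hm hmem'
    simp only [Set.mem_setOf_eq] at hmem'
    rw [cut_iter hv hmp hk (by omega)] at hmem'
    have := (cut_fix_iff hconn hv hmp hk).mp hmem'
    have := mp_inj hv (by rw [hmp]; omega : m < mp g v) (by rw [hmp]; omega) this
    omega
  have h1 : ht (cut g (g^[k - 1] v)) v ≤ k - 1 := Nat.sInf_le hmem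
  have h2 := Nat.sInf_mem (⟨k - 1, hmem⟩ : Set.Nonempty _)
  rcases Nat.lt_or_ge (ht (cut g (g^[k - 1] v)) v) (k - 1) with h | h
  · exact absurd h2 (hnot _ h)
  · omega

end Cut

end B

section Forward

variable {f : Fin n → Fin n} {r v : Fin n}

lemma girth_tw (hr : f r = r) (hreach : ∀ x, ∃ j, f^[j] x = r) :
    girth (tw f v) = ht f v + 1 := by
  rw [girth_eq]
  have e : Fin (ht f v + 1) ≃ {x : Fin n // Per (tw f v) x} := by
    refine Equiv.ofBijective
      (fun i => ⟨(tw f v)^[(i : ℕ)] v, tw_per_all hr hreach _⟩) ⟨?_, ?_⟩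
    · intro i j hij
      simp only [Subtype.mk.injEq] at hij
      have hi : (i : ℕ) ≤ ht f v := by omega
      have hj : (j : ℕ) ≤ ht f v := by omega
      rw [tw_iter hr hreach hi, tw_iter hr hreach hj] at hij
      exact Fin.ext (path_inj hr hreach hi hj hij)
    · rintro ⟨x, hx⟩
      obtain ⟨i, hi, hxi⟩ := tw_per_subset hr hreach hx
      exact ⟨⟨i, by omega⟩, Subtype.ext hxi.symm⟩
  rw [← Nat.card_congr e, Nat.card_eq_fintype_card, Fintype.card_fin]

lemma conn_tw (hr : f r = r) (hreach : ∀ x, ∃ j, f^[j] x = r) : ConnFun (tw f v) := by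
  refine ⟨⟨v⟩, fun i j => ?_⟩
  have key : ∀ x, Relation.EqvGen (fun a b => tw f v a = b) x v := by
    intro x
    obtain ⟨s, hs⟩ := tw_reach (v := v) hr hreach x
    have := B.eqvgen_iterate (tw f v) x s
    rwa [hs] at this
  exact Relation.EqvGen.trans _ _ _ (key i) (Relation.EqvGen.symm _ _ (key j))

end Forward

section MaxPer

lemma exists_maxPer (g : Fin n → Fin n) (hx : ∃ x, Per g x) :
    ∃ v, Per g v ∧ ∀ x, Per g x → x ≤ v := by
  classical
  obtain ⟨x0, hx0⟩ := hx
  let S : Finset (Fin n) := Finset.univ.filter (fun x => Per g x)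
  have hS : S.Nonempty := ⟨x0, by simp [S, hx0]⟩
  exact ⟨S.max' hS, by have := S.max'_mem hS; simpa [S] using this,
    fun x hx => S.le_max' x (by simp [S, hx])⟩

noncomputable def maxPer (g : Fin n → Fin n) (hx : ∃ x, Per g x) : Fin n :=
  (exists_maxPer g hx).choose

lemma maxPer_per (g : Fin n → Fin n) (hx : ∃ x, Per g x) : Per g (maxPer g hx) :=
  (exists_maxPer g hx).choose_spec.1

lemma maxPer_le (g : Fin n → Fin n) (hx : ∃ x, Per g x) {x : Fin n} (h : Per g x) :
    x ≤ maxPer g hx :=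
  (exists_maxPer g hx).choose_spec.2 x h

lemma maxPer_eq (g : Fin n → Fin n) (hx : ∃ x, Per g x) {v : Fin n} (hv : Per g v)
    (hmax : ∀ x, Per g x → x ≤ v) : maxPer g hx = v :=
  le_antisymm (hmax _ (maxPer_per g hx)) (maxPer_le g hx hv)

lemma per_nonempty {g : Fin n → Fin n} {k : ℕ} (hg : girth g = k) (hk : 1 ≤ k) :
    ∃ x, Per g x := by
  have h : 0 < Nat.card {x : Fin n // Per g x} := by rw [← girth_eq, hg]; omega
  obtain ⟨⟨x, hx⟩⟩ := (Nat.card_pos_iff.mp h).1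
  exact ⟨x, hx⟩

end MaxPer

section Assembly

variable {k : ℕ}

def phiMap (k : ℕ) (hk : 1 ≤ k) :
    {p : (Fin n → Fin n) × Fin n //
        IsTreeFun p.1 ∧ IsRec p.1 p.2 ∧ ht p.1 p.2 = k - 1} →
      {f : Fin n → Fin n // ConnFun f ∧ girth f = k} :=
  fun p => ⟨tw p.1.1 p.1.2, by
    obtain ⟨htree, hrec, hht⟩ := p.2
    obtain ⟨r, hr, hreach⟩ := htree
    refine ⟨conn_tw hr hreach, ?_⟩
    rw [girth_tw hr hreach, hht]
    omega⟩

noncomputable def psiMap (k : ℕ) (hk : 1 ≤ k) :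
    {f : Fin n → Fin n // ConnFun f ∧ girth f = k} →
      {p : (Fin n → Fin n) × Fin n //
        IsTreeFun p.1 ∧ IsRec p.1 p.2 ∧ ht p.1 p.2 = k - 1} :=
  fun q =>
    ⟨(B.cut q.1 (q.1^[k - 1] (maxPer q.1 (per_nonempty q.2.2 hk))),
        maxPer q.1 (per_nonempty q.2.2 hk)), by
      set g := q.1 with hgdef
      have hconn := q.2.1.2
      have hx : ∃ x, Per g x := per_nonempty q.2.2 hk
      have hv : Per g (maxPer g hx) := maxPer_per g hx
      have hvmax : ∀ x, Per g x → x ≤ maxPer g hx := fun x h => maxPer_le g hx h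
      have hmp : B.mp g (maxPer g hx) = k := by
        rw [← B.girth_eq_mp hconn hv]; exact q.2.2
      exact ⟨B.cut_tree hconn hv hmp hk, B.cut_rec hconn hv hvmax hmp hk,
        B.cut_ht hconn hv hmp hk⟩⟩

lemma left_inv (k : ℕ) (hk : 1 ≤ k) (p : {p : (Fin n → Fin n) × Fin n //
    IsTreeFun p.1 ∧ IsRec p.1 p.2 ∧ ht p.1 p.2 = k - 1}) :
    psiMap k hk (phiMap k hk p) = p := by
  obtain ⟨⟨f, v⟩, htree, hrec, hht⟩ := p
  obtain ⟨r, hr, hreach⟩ := htree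
  dsimp only at hrec hht hr hreach
  apply Subtype.ext
  simp only [psiMap, phiMap]
  have hperv : Per (tw f v) v := ⟨ht f v + 1, Nat.succ_pos _, tw_per hr hreach⟩
  have hmaxv : ∀ hx, maxPer (tw f v) hx = v := fun hx => maxPer_eq _ hx hperv
    (fun x h => by
      obtain ⟨i, hi, hxi⟩ := tw_per_subset hr hreach h
      rw [hxi, tw_iter hr hreach hi]; exact hrec i)
  rw [hmaxv]
  have hr' : (tw f v)^[k - 1] v = r := by
    have h1 : k - 1 ≤ ht f v := by omega
    rw [tw_iter hr hreach h1, ← hht]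
    exact ht_hit hr hreach
  have hcut : B.cut (tw f v) r = f := by
    funext x
    by_cases hx : x = r
    · subst hx; simp [B.cut, hr]
    · have hfx : f x ≠ x := fun h => hx (fix_unique hreach h)
      simp [B.cut, hx, tw, hfx]
  rw [hr', hcut]

lemma right_inv (k : ℕ) (hk : 1 ≤ k) (q : {f : Fin n → Fin n // ConnFun f ∧ girth f = k}) :
    phiMap k hk (psiMap k hk q) = q := by
  obtain ⟨g, hcf, hg⟩ := q
  apply Subtype.ext
  simp only [phiMap, psiMap]
  have hconn := hcf.2
  have hx : ∃ x, Per g x := per_nonempty hg hk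
  have hv : Per g (maxPer g hx) := maxPer_per g hx
  have hmp : B.mp g (maxPer g hx) = k := by
    rw [← B.girth_eq_mp hconn hv]; exact hg
  set v := maxPer g hx with hvdef
  set r := g^[k - 1] v with hrdef
  funext x
  have hfix : B.cut g r x = x ↔ x = r := B.cut_fix_iff hconn hv hmp hk
  by_cases hcx : B.cut g r x = x
  · have hxr : x = r := hfix.mp hcx
    have : g x = v := by rw [hxr, hrdef]; exact B.gr hv hmp hk
    simp [tw, hcx, this]
  · have hxr : x ≠ r := fun h => hcx (hfix.mpr h)
    have hgx : g x ≠ x := by simpa [B.cut, hxr] using hcx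
    simp [tw, B.cut, hxr, hgx]

end Assembly

end Stmt3Aux

/-- The number of rooted labeled trees of order `n` with a distinguished record at
height `k-1` equals the number of connected endofunctions on `{1,…,n}` of girth `k`. -/
theorem stmt3 (n k : ℕ) (hk : 1 ≤ k) (hkn : k ≤ n) :
    Nat.card {p : (Fin n → Fin n) × Fin n //
        IsTreeFun p.1 ∧ IsRec p.1 p.2 ∧ ht p.1 p.2 = k - 1} =
      Nat.card {f : Fin n → Fin n // ConnFun f ∧ girth f = k} := by
  exact Nat.card_congr ⟨Stmt3Aux.phiMap k hk, Stmt3Aux.psiMap k hk,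
    Stmt3Aux.left_inv k hk, Stmt3Aux.right_inv k hk⟩
end

section
/- The total number of records over all rooted labeled trees on {1,...,n} equals the number of connected endofunctions on {1,...,n}. -/
open Function Set

section Iterate

variable {α : Type*} {f g : α → α} {x p r : α}

theorem exists_iterate_eq_of_eqOn_compl (hfg : EqOn f g {r}ᶜ) :
    ∀ {k : ℕ} {x : α}, f^[k] x = r → ∃ j, g^[j] x = r
  | 0, _, h => ⟨0, h⟩
  | k + 1, x, h => by
    by_cases hx : x = r
    · exact ⟨0, hx⟩
    · obtain ⟨j, hj⟩ := exists_iterate_eq_of_eqOn_compl hfg (k := k) (x := f x) h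
      exact ⟨j + 1, by rwa [iterate_succ_apply, ← hfg hx]⟩

theorem eqvGen_iterate (f : α → α) (k : ℕ) (x : α) :
    Relation.EqvGen (fun a b => f a = b) x (f^[k] x) := by
  induction k generalizing x with
  | zero => exact .refl x
  | succ k ih => exact .trans _ _ _ (.rel x (f x) rfl) (ih (f x))

theorem exists_iterate_iterate_eq_of_mem_periodicPts (hx : x ∈ periodicPts f) (j : ℕ) :
    ∃ i, f^[i] (f^[j] x) = x := by
  obtain ⟨n, hn, hper⟩ := mem_periodicPts.1 hx
  refine ⟨n * j - j, ?_⟩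
  rw [← iterate_add_apply, Nat.sub_add_cancel (Nat.le_mul_of_pos_left j hn)]
  exact (hper.mul_const j).eq

/-- Whether a point reaches the periodic point `p` is unchanged by a step of `f`, hence is
constant on the classes of the equivalence generated by `f`. -/
theorem exists_iterate_eq_of_eqvGen (hp : p ∈ periodicPts f)
    (h : Relation.EqvGen (fun a b => f a = b) x p) : ∃ k, f^[k] x = p := by
  have step : ∀ a, (∃ k, f^[k] a = p) ↔ ∃ k, f^[k] (f a) = p := fun a =>
    ⟨fun
      | ⟨0, ha⟩ => ha ▸ exists_iterate_iterate_eq_of_mem_periodicPts hp 1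
      | ⟨k + 1, ha⟩ => ⟨k, ha⟩,
     fun ⟨k, ha⟩ => ⟨k + 1, ha⟩⟩
  have hequiv : Equivalence fun a b => (∃ k, f^[k] a = p) ↔ ∃ k, f^[k] b = p :=
    ⟨fun _ => Iff.rfl, Iff.symm, Iff.trans⟩
  exact (hequiv.eqvGen_iff.1 (Relation.EqvGen.mono (fun a _ hab => hab ▸ step a) _ _ h)).2
    ⟨0, rfl⟩

theorem periodicPts_nonempty [Finite α] [Nonempty α] (f : α → α) : (periodicPts f).Nonempty := by
  obtain ⟨a, b, hab, heq⟩ :=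
    Finite.exists_ne_map_eq_of_infinite fun k : ℕ => f^[k] (Classical.arbitrary α)
  wlog hlt : a < b generalizing a b
  · exact this b a hab.symm heq.symm (hab.lt_or_gt.resolve_left hlt)
  refine ⟨f^[a] (Classical.arbitrary α), mk_mem_periodicPts (Nat.sub_pos_of_lt hlt) ?_⟩
  change f^[b - a] (f^[a] _) = _
  rw [← iterate_add_apply, Nat.sub_add_cancel hlt.le]
  exact heq.symm

theorem eq_of_isFixedPt_of_forall_exists_iterate_eq (hreach : ∀ x, ∃ k, f^[k] x = r)
    (hs : IsFixedPt f x) : x = r :=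
  let ⟨k, hk⟩ := hreach x
  (hs.iterate k).eq.symm.trans hk

end Iterate

section RedirectRoot

variable {α : Type*} [DecidableEq α] {f : α → α} {r : α}

theorem exists_iterate_update_eq (hreach : ∀ x, ∃ k, f^[k] x = r) (v x : α) :
    ∃ k, (update f r v)^[k] x = r :=
  let ⟨_, hk⟩ := hreach x
  exists_iterate_eq_of_eqOn_compl (fun _ hy => (update_of_ne hy v f).symm) hk

theorem mem_periodicPts_update (hreach : ∀ x, ∃ k, f^[k] x = r) (v : α) :
    r ∈ periodicPts (update f r v) := by
  obtain ⟨k, hk⟩ := exists_iterate_update_eq hreach v v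
  refine mk_mem_periodicPts k.succ_pos (?_ : (update f r v)^[k] (update f r v r) = r)
  rwa [update_self]

theorem periodicPts_update_subset (hreach : ∀ x, ∃ k, f^[k] x = r) (v : α) :
    periodicPts (update f r v) ⊆ range (f^[·] v) := by
  have hmaps : MapsTo (update f r v) (range (f^[·] v)) (range (f^[·] v)) := by
    rintro _ ⟨e, rfl⟩
    by_cases he : f^[e] v = r
    · exact ⟨0, by change v = update f r v (f^[e] v); rw [he, update_self]⟩
    · exact ⟨e + 1, by change f^[e + 1] v = _; rw [update_of_ne he, iterate_succ_apply']⟩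
  intro x hx
  obtain ⟨j, hj⟩ := exists_iterate_update_eq hreach v x
  obtain ⟨i, hi⟩ := exists_iterate_iterate_eq_of_mem_periodicPts hx j
  rw [hj] at hi
  exact hi ▸ hmaps.iterate i (hreach v)

theorem isGreatest_periodicPts_update [Preorder α] (hreach : ∀ x, ∃ k, f^[k] x = r) {v : α}
    (hrec : ∀ k, f^[k] v ≤ v) : IsGreatest (periodicPts (update f r v)) v := by
  refine ⟨?_, fun x hx => ?_⟩
  · simpa using (bijOn_periodicPts _).mapsTo (mem_periodicPts_update hreach v)
  · obtain ⟨k, rfl⟩ := periodicPts_update_subset hreach v hx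
    exact hrec k

theorem update_update_eq_of_apply_eq (hr : f r = r) (v : α) : update (update f r v) r r = f := by
  rw [update_idem, update_eq_self_iff, hr]

theorem eq_of_update_eq [PartialOrder α] {f₁ f₂ : α → α} {r₁ r₂ v₁ v₂ : α}
    (hr₁ : f₁ r₁ = r₁) (hreach₁ : ∀ x, ∃ k, f₁^[k] x = r₁) (hrec₁ : ∀ k, f₁^[k] v₁ ≤ v₁)
    (hr₂ : f₂ r₂ = r₂) (hreach₂ : ∀ x, ∃ k, f₂^[k] x = r₂) (hrec₂ : ∀ k, f₂^[k] v₂ ≤ v₂)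
    (h : update f₁ r₁ v₁ = update f₂ r₂ v₂) : f₁ = f₂ ∧ v₁ = v₂ := by
  have hv : v₁ = v₂ :=
    (isGreatest_periodicPts_update hreach₁ hrec₁).unique
      (h ▸ isGreatest_periodicPts_update hreach₂ hrec₂)
  have hr : r₁ = r₂ :=
    (bijOn_periodicPts _).injOn (mem_periodicPts_update hreach₁ v₁)
      (h ▸ mem_periodicPts_update hreach₂ v₂) (by rw [update_self, h, update_self, hv])
  subst hv hr
  refine ⟨?_, rfl⟩
  calc f₁ = update (update f₁ r₁ v₁) r₁ r₁ := (update_update_eq_of_apply_eq hr₁ v₁).symm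
    _ = update (update f₂ r₁ v₁) r₁ r₁ := by rw [h]
    _ = f₂ := update_update_eq_of_apply_eq hr₂ v₁

/-- The record is the largest periodic point `m` of `F`, the root its periodic predecessor. -/
theorem exists_update_eq_of_eqvGen [Finite α] [Nonempty α] [LinearOrder α] {F : α → α}
    (hconn : ∀ x y, Relation.EqvGen (fun a b => F a = b) x y) :
    ∃ f r v, f r = r ∧ (∀ x, ∃ k, f^[k] x = r) ∧ (∀ k, f^[k] v ≤ v) ∧ update f r v = F := by
  obtain ⟨m, hm, hmax⟩ := (periodicPts F).exists_max_image id (toFinite _) (periodicPts_nonempty F)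
  obtain ⟨r, hr, hrm⟩ := (bijOn_periodicPts F).surjOn hm
  have hmaps : MapsTo (update F r r) (periodicPts F) (periodicPts F) := by
    intro y hy
    by_cases hyr : y = r
    · rwa [hyr, update_self]
    · exact update_of_ne hyr r F ▸ (bijOn_periodicPts F).mapsTo hy
  refine ⟨update F r r, r, m, update_self r r F, fun x => ?_,
    fun k => hmax _ (hmaps.iterate k hm), by rw [update_idem, ← hrm, update_eq_self]⟩
  obtain ⟨_, hk⟩ := exists_iterate_eq_of_eqvGen hr (hconn x r)
  exact exists_iterate_eq_of_eqOn_compl (fun _ hy => (update_of_ne hy r F).symm) hk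

end RedirectRoot

theorem connFun_update {n : ℕ} {f : Fin n → Fin n} {r : Fin n}
    (hreach : ∀ x, ∃ k, f^[k] x = r) (v : Fin n) : ConnFun (update f r v) := by
  have hroot : ∀ x, Relation.EqvGen (fun a b => update f r v a = b) x r := fun x => by
    obtain ⟨k, hk⟩ := exists_iterate_update_eq hreach v x
    simpa only [hk] using eqvGen_iterate (update f r v) k x
  exact ⟨⟨r⟩, fun i j => .trans _ _ _ (hroot i) (.symm _ _ (hroot j))⟩

noncomputable def redirectRootToRecord (n : ℕ) :
    {p : (Fin n → Fin n) × Fin n // IsTreeFun p.1 ∧ IsRec p.1 p.2} →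
      {f : Fin n → Fin n // ConnFun f} :=
  fun p => ⟨update p.1.1 p.2.1.choose p.1.2, connFun_update p.2.1.choose_spec.2 p.1.2⟩

/-- The total number of records over all rooted labeled trees on `{1,…,n}`
(counted as pairs (tree, record)) equals the number of connected endofunctions. -/
theorem stmt4 (n : ℕ) :
    Nat.card {p : (Fin n → Fin n) × Fin n // IsTreeFun p.1 ∧ IsRec p.1 p.2} =
      Nat.card {f : Fin n → Fin n // ConnFun f} := by
  refine Nat.card_eq_of_bijective (redirectRootToRecord n) ⟨?_, ?_⟩
  · rintro ⟨⟨f₁, v₁⟩, hT₁, hR₁⟩ ⟨⟨f₂, v₂⟩, hT₂, hR₂⟩ h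
    obtain ⟨hf, hv⟩ := eq_of_update_eq hT₁.choose_spec.1 hT₁.choose_spec.2 hR₁
      hT₂.choose_spec.1 hT₂.choose_spec.2 hR₂ (congrArg Subtype.val h)
    exact Subtype.ext (Prod.ext hf hv)
  · rintro ⟨F, hne, hconn⟩
    have : Nonempty (Fin n) := hne
    obtain ⟨f, r, v, hr, hreach, hrec, rfl⟩ := exists_update_eq_of_eqvGen hconn
    have hT : IsTreeFun f := ⟨r, hr, hreach⟩
    refine ⟨⟨(f, v), hT, hrec⟩, Subtype.ext ?_⟩
    change update f hT.choose v = update f r v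
    rw [eq_of_isFixedPt_of_forall_exists_iterate_eq hreach hT.choose_spec.1]
end

section
/- The number of connected endofunctions on {1,...,n} of girth k equals n(n-1)···(n-k+1) · n^(n-k-1), for 1 ≤ k ≤ n. -/
/-!
Joyal's bijection. Given a connected `f` of girth `k` and a marked point `v`, enumerate the cycle as
`s : Fin k ↪ α` starting where the path from `v` enters it, fix the cycle pointwise, and replace
the path, read from the cycle outwards, by the permutation of its vertex set that takes a fixed
enumeration of that set to the path. The result is a map `g` with `g (s i) = s i`, and
`(f, v) ↦ (s, g)` is a bijection: the path comes back as the periodic points of `g` off the cycle,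
listed through the same fixed enumeration and then moved by `g`. There are
`n(n-1)⋯(n-k+1) · n^(n-k)` pairs `(s, g)`.
-/

open Function Set

variable {α : Type*}

def IsConnectedEndo (f : α → α) : Prop := ∀ x y, ∃ a b, f^[a] x = f^[b] y

section Dynamics
variable {f g : α → α} {U : Set α}

theorem eqvGen_iff_exists_iterate_eq {x y : α} :
    Relation.EqvGen (fun a b => f a = b) x y ↔ ∃ a b, f^[a] x = f^[b] y := by
  constructor
  · intro h
    induction h with
    | rel a b hab => exact ⟨1, 0, hab⟩
    | refl a => exact ⟨0, 0, rfl⟩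
    | symm a b _ ih => obtain ⟨u, v, h⟩ := ih; exact ⟨v, u, h.symm⟩
    | trans a b c _ _ ih₁ ih₂ =>
      obtain ⟨u, v, h₁⟩ := ih₁
      obtain ⟨u', v', h₂⟩ := ih₂
      refine ⟨u' + u, v + v', ?_⟩
      rw [iterate_add_apply, h₁, ← iterate_add_apply, add_comm, iterate_add_apply, h₂,
        ← iterate_add_apply]
  · have forward (a : ℕ) (z : α) : Relation.EqvGen (fun a b => f a = b) z (f^[a] z) := by
      induction a with
      | zero => exact .refl z
      | succ a ih => exact .trans _ _ _ ih (.rel _ _ (iterate_succ_apply' f a z).symm)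
    rintro ⟨a, b, h⟩
    exact .trans _ _ _ (forward a x) (h ▸ .symm _ _ (forward b y))

theorem range_subset_periodicPts_of_fixed {ι : Type*} {s : ι → α} (hg : ∀ i, g (s i) = s i) :
    range s ⊆ periodicPts g := by
  rintro _ ⟨i, rfl⟩
  exact mk_mem_periodicPts one_pos (hg i)

theorem exists_iterate_mem_of_eqOn_compl (hg : ∀ x, ∃ a, g^[a] x ∈ U)
    (hfg : ∀ x ∉ U, f x = g x) (x : α) : ∃ a, f^[a] x ∈ U := by
  obtain ⟨a, ha⟩ := hg x
  induction a generalizing x with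
  | zero => exact ⟨0, ha⟩
  | succ a ih =>
    by_cases hx : x ∈ U
    · exact ⟨0, hx⟩
    · obtain ⟨b, hb⟩ := ih (f x) (by rwa [hfg x hx, ← iterate_succ_apply])
      exact ⟨b + 1, hb⟩

theorem periodicPts_subset_of_mapsTo (hU : MapsTo f U U) (hreach : ∀ x, ∃ a, f^[a] x ∈ U) :
    periodicPts f ⊆ U := by
  rintro x ⟨p, hp, hpx⟩
  obtain ⟨a, ha⟩ := hreach x
  rw [← (hpx.mul_const a).eq, ← Nat.sub_add_cancel (Nat.le_mul_of_pos_left a hp),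
    iterate_add_apply]
  exact hU.iterate _ ha

variable [Finite α]

theorem exists_iterate_mem_periodicPts (f : α → α) (x : α) :
    ∃ a, f^[a] x ∈ periodicPts f := by
  obtain ⟨i, j, hne, hij⟩ := Finite.exists_ne_map_eq_of_infinite (fun i : ℕ => f^[i] x)
  wlog hlt : i < j generalizing i j
  · exact this j i hne.symm hij.symm (by omega)
  refine ⟨i, j - i, by omega, ?_⟩
  rw [IsPeriodicPt, IsFixedPt, ← iterate_add_apply, Nat.sub_add_cancel hlt.le]
  exact hij.symm

theorem subset_periodicPts_of_mapsTo_of_injOn (hU : MapsTo f U U) (hinj : InjOn f U) :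
    U ⊆ periodicPts f := by
  intro x hx
  obtain ⟨p, hp, hpx⟩ := (hU.restrict_inj.2 hinj).mem_periodicPts ⟨x, hx⟩
  refine ⟨p, hp, ?_⟩
  simpa [IsPeriodicPt, IsFixedPt, hU.iterate_restrict, Subtype.ext_iff] using hpx

theorem periodicPts_eq_of_mapsTo (hU : MapsTo f U U) (hinj : InjOn f U)
    (hreach : ∀ x, ∃ a, f^[a] x ∈ U) : periodicPts f = U :=
  (periodicPts_subset_of_mapsTo hU hreach).antisymm
    (subset_periodicPts_of_mapsTo_of_injOn hU hinj)

end Dynamics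

namespace IsConnectedEndo
variable [Finite α] {f : α → α} {c : α}

theorem periodicPts_eq_range (hf : IsConnectedEndo f) (hc : c ∈ periodicPts f) :
    periodicPts f = range (fun i : Fin (minimalPeriod f c) => f^[i] c) := by
  have hp := minimalPeriod_pos_of_mem_periodicPts hc
  have mem_range (a : ℕ) : f^[a] c ∈ range (fun i : Fin (minimalPeriod f c) => f^[i] c) :=
    ⟨⟨a % _, Nat.mod_lt a hp⟩, iterate_mod_minimalPeriod_eq⟩
  refine periodicPts_eq_of_mapsTo ?_ ?_ fun x => ?_
  · rintro _ ⟨i, rfl⟩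
    simpa only [← iterate_succ_apply'] using mem_range (i + 1)
  · refine (bijOn_periodicPts f).injOn.mono ?_
    rintro _ ⟨i, rfl⟩
    exact mk_mem_periodicPts hp ((isPeriodicPt_minimalPeriod f c).apply_iterate i)
  · obtain ⟨a, b, hab⟩ := hf x c
    exact ⟨a, hab ▸ mem_range b⟩

theorem card_periodicPts (hf : IsConnectedEndo f) (hc : c ∈ periodicPts f) :
    Nat.card (periodicPts f) = minimalPeriod f c := by
  rw [hf.periodicPts_eq_range hc, Nat.card_range_of_injective, Nat.card_fin]
  exact fun i j hij => Fin.ext (iterate_injOn_Iio_minimalPeriod i.isLt j.isLt hij)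

end IsConnectedEndo

namespace List

theorem iterate_apply_getElem_of_step {F : α → α} {l : List α}
    (h : ∀ j (hj : j + 1 < l.length), F l[j + 1] = l[j]) {a j : ℕ} (ha : a ≤ j)
    (hj : j < l.length) : F^[a] l[j] = l[j - a] := by
  induction a with
  | zero => rfl
  | succ a ih =>
    have step := h (j - (a + 1)) (by omega)
    simp only [show j - (a + 1) + 1 = j - a by omega] at step
    rw [iterate_succ_apply', ih (by omega), step]

variable [DecidableEq α] {l : List α}

/-- For `l` without duplicates: the permutation of its elements taking the `j`-th entry of the
fixed enumeration `l.toFinset.toList` to `l[j]`. -/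
noncomputable def arrange (l : List α) (x : α) : α := l.getD (l.toFinset.toList.idxOf x) x

theorem length_toList_toFinset (h : l.Nodup) : l.toFinset.toList.length = l.length := by
  rw [Finset.length_toList, toFinset_card_of_nodup h]

theorem mem_toList_toFinset {x : α} : x ∈ l.toFinset.toList ↔ x ∈ l := by
  simp

theorem arrange_getElem_toList (h : l.Nodup) {j : ℕ} (hj : j < l.toFinset.toList.length) :
    l.arrange l.toFinset.toList[j] = l[j]'(length_toList_toFinset h ▸ hj) := by
  rw [arrange, (Finset.nodup_toList _).idxOf_getElem, getD_eq_getElem]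

theorem arrange_mem (h : l.Nodup) {x : α} (hx : x ∈ l) : l.arrange x ∈ l := by
  obtain ⟨j, hj, rfl⟩ := getElem_of_mem (mem_toList_toFinset.2 hx)
  rw [arrange_getElem_toList h]
  exact getElem_mem _

theorem injOn_arrange (h : l.Nodup) : InjOn l.arrange {x | x ∈ l} := by
  intro x hx y hy hxy
  obtain ⟨i, hi, rfl⟩ := getElem_of_mem (mem_toList_toFinset.2 hx)
  obtain ⟨j, hj, rfl⟩ := getElem_of_mem (mem_toList_toFinset.2 hy)
  rw [arrange_getElem_toList h, arrange_getElem_toList h, h.getElem_inj_iff] at hxy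
  simp only [hxy]

theorem map_arrange_toList (h : l.Nodup) : l.toFinset.toList.map l.arrange = l :=
  ext_getElem (by rw [length_map, length_toList_toFinset h]) fun j _ _ => by
    rw [getElem_map, arrange_getElem_toList h]

theorem arrange_map_toList {s : Finset α} {g : α → α} (hs : (s.toList.map g).toFinset = s)
    {x : α} (hx : x ∈ s) : (s.toList.map g).arrange x = g x := by
  obtain ⟨j, hj, rfl⟩ := getElem_of_mem (Finset.mem_toList.2 hx)
  rw [arrange, hs, (Finset.nodup_toList _).idxOf_getElem, getD_eq_getElem _ _ (by simpa using hj),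
    getElem_map]

end List
section Attach
variable [Fintype α] {k : ℕ}

section Defs
variable (s : Fin k ↪ α) (g : α → α)

open scoped Classical in
noncomputable def spine : Finset α := {x | x ∈ periodicPts g ∧ x ∉ range s}

noncomputable def spinePath : List α := (spine s g).toList.map g

variable [NeZero k]

noncomputable def spineChain : List α := s 0 :: spinePath s g

noncomputable def spineTip : α := (spineChain s g).getLast (List.cons_ne_nil _ _)

-- An entry of `spinePath` goes to its predecessor in `spineChain`.
noncomputable def attachSpine [DecidableEq α] : α → α := fun x =>
  if h : x ∈ range s then s (s.invOfMemRange ⟨x, h⟩ + 1)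
  else if x ∈ spinePath s g then (spineChain s g).getD ((spinePath s g).idxOf x) x
  else g x

end Defs

variable {s : Fin k ↪ α} {g : α → α}

theorem mem_spine {x : α} : x ∈ spine s g ↔ x ∈ periodicPts g ∧ x ∉ range s := by
  simp [spine]

theorem injOn_spine : InjOn g (spine s g) :=
  (bijOn_periodicPts g).injOn.mono fun _ hx => (mem_spine.1 hx).1

theorem nodup_spinePath : (spinePath s g).Nodup :=
  (Finset.nodup_toList _).map_on fun _ hx _ hy => injOn_spine
    (Finset.mem_toList.1 hx) (Finset.mem_toList.1 hy)

theorem mapsTo_spine (hg : ∀ i, g (s i) = s i) : MapsTo g (spine s g) (spine s g) := by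
  intro x hx
  rw [Finset.mem_coe, mem_spine] at hx ⊢
  refine ⟨(bijOn_periodicPts g).mapsTo hx.1, ?_⟩
  rintro ⟨i, hi⟩
  rw [← hg i] at hi
  exact hx.2
    ⟨i, (bijOn_periodicPts g).injOn (range_subset_periodicPts_of_fixed hg ⟨i, rfl⟩) hx.1 hi⟩

theorem image_spine [DecidableEq α] (hg : ∀ i, g (s i) = s i) :
    (spine s g).image g = spine s g :=
  Finset.eq_of_subset_of_card_le (Finset.image_subset_iff.2 fun _ hx => mapsTo_spine hg hx)
    (Finset.card_image_of_injOn injOn_spine).ge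

theorem mem_spinePath (hg : ∀ i, g (s i) = s i) {x : α} :
    x ∈ spinePath s g ↔ x ∈ spine s g := by
  classical
  rw [← image_spine hg, Finset.mem_image, spinePath, List.mem_map]
  simp only [Finset.mem_toList]

variable [NeZero k]

theorem length_spineChain : (spineChain s g).length = (spinePath s g).length + 1 :=
  rfl

theorem spineTip_eq_getElem :
    spineTip s g = (spineChain s g)[(spinePath s g).length]'(by rw [length_spineChain]; omega) := by
  simp [spineTip, List.getLast_eq_getElem, spineChain]

variable [DecidableEq α]

theorem attachSpine_apply_cycle (i : Fin k) : attachSpine s g (s i) = s (i + 1) := by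
  rw [attachSpine, dif_pos (mem_range_self i), s.right_inv_of_invOfMemRange]

theorem iterate_attachSpine_cycle (i : Fin k) (a : ℕ) :
    (attachSpine s g)^[a] (s i) = s ⟨(i + a) % k, Nat.mod_lt _ (NeZero.pos k)⟩ := by
  induction a with
  | zero => simp [Nat.mod_eq_of_lt i.isLt]
  | succ a ih =>
    rw [iterate_succ_apply', ih, attachSpine_apply_cycle]
    congr 1
    ext
    simp [Fin.val_add, ← add_assoc]

theorem attachSpine_getElem_succ (hg : ∀ i, g (s i) = s i) (j : ℕ)
    (hj : j + 1 < (spineChain s g).length) :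
    attachSpine s g (spineChain s g)[j + 1] = (spineChain s g)[j] := by
  have hj' : j < (spinePath s g).length := by simpa [spineChain] using hj
  have hmem : (spinePath s g)[j] ∈ spine s g := (mem_spinePath hg).1 (List.getElem_mem hj')
  simp only [spineChain, List.getElem_cons_succ]
  rw [attachSpine, dif_neg (mem_spine.1 hmem).2, if_pos (List.getElem_mem hj'),
    nodup_spinePath.idxOf_getElem, List.getD_eq_getElem]
  rfl

theorem attachSpine_of_notMem_periodicPts (hg : ∀ i, g (s i) = s i) {x : α}
    (hx : x ∉ periodicPts g) : attachSpine s g x = g x := by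
  rw [attachSpine, dif_neg fun h => hx (range_subset_periodicPts_of_fixed hg h),
    if_neg fun h => hx (mem_spine.1 ((mem_spinePath hg).1 h)).1]

theorem exists_iterate_attachSpine_eq (hg : ∀ i, g (s i) = s i) (x : α) :
    ∃ a, (attachSpine s g)^[a] x = s 0 := by
  have from_cycle (i : Fin k) : (attachSpine s g)^[k - i] (s i) = s 0 := by
    rw [iterate_attachSpine_cycle]
    congr 1
    ext
    simp [Nat.add_sub_cancel' i.isLt.le]
  have from_chain (j : ℕ) (hj : j < (spineChain s g).length) :
      (attachSpine s g)^[j] (spineChain s g)[j] = s 0 := by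
    rw [List.iterate_apply_getElem_of_step (attachSpine_getElem_succ hg) le_rfl hj]
    simp [spineChain]
  obtain ⟨a, ha⟩ := exists_iterate_mem_of_eqOn_compl (exists_iterate_mem_periodicPts g)
    (fun _ hx => attachSpine_of_notMem_periodicPts hg hx) x
  suffices ∃ b, (attachSpine s g)^[b] ((attachSpine s g)^[a] x) = s 0 by
    obtain ⟨b, hb⟩ := this
    exact ⟨b + a, by rwa [iterate_add_apply]⟩
  by_cases hy : (attachSpine s g)^[a] x ∈ range s
  · obtain ⟨i, hi⟩ := hy
    exact ⟨_, hi ▸ from_cycle i⟩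
  · obtain ⟨j, hj, hjy⟩ :=
      List.getElem_of_mem ((mem_spinePath hg).2 (mem_spine.2 ⟨ha, hy⟩))
    refine ⟨j + 1, ?_⟩
    rw [← hjy]
    exact from_chain (j + 1) (by simpa [spineChain] using hj)

theorem periodicPts_attachSpine (hg : ∀ i, g (s i) = s i) :
    periodicPts (attachSpine s g) = range s := by
  refine periodicPts_eq_of_mapsTo ?_ ?_ fun x => ?_
  · rintro _ ⟨i, rfl⟩
    rw [attachSpine_apply_cycle]
    exact mem_range_self _
  · rintro _ ⟨i, rfl⟩ _ ⟨j, rfl⟩ h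
    rw [attachSpine_apply_cycle, attachSpine_apply_cycle] at h
    rw [add_right_cancel (s.injective h)]
  · obtain ⟨a, ha⟩ := exists_iterate_attachSpine_eq hg x
    exact ⟨a, ha ▸ mem_range_self 0⟩

theorem isConnectedEndo_attachSpine (hg : ∀ i, g (s i) = s i) :
    IsConnectedEndo (attachSpine s g) := fun x y => by
  obtain ⟨a, ha⟩ := exists_iterate_attachSpine_eq hg x
  obtain ⟨b, hb⟩ := exists_iterate_attachSpine_eq hg y
  exact ⟨a, b, ha.trans hb.symm⟩

theorem card_periodicPts_attachSpine (hg : ∀ i, g (s i) = s i) :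
    Nat.card (periodicPts (attachSpine s g)) = k := by
  rw [periodicPts_attachSpine hg, Nat.card_range_of_injective s.injective, Nat.card_fin]

end Attach

section Detach
variable [Fintype α]

section Defs
variable (f : α → α) (v : α)

open scoped Classical in
noncomputable def hitTime : ℕ := Nat.find (exists_iterate_mem_periodicPts f v)

-- The path from `v` into the cycle, listed from the cycle outwards as `spinePath` is.
noncomputable def tailPath : List α :=
  List.ofFn fun j : Fin (hitTime f v) => f^[hitTime f v - (j + 1)] v

open scoped Classical in
noncomputable def detachSpine [DecidableEq α] : α → α := fun x =>
  if x ∈ periodicPts f then x else if x ∈ tailPath f v then (tailPath f v).arrange x else f x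

noncomputable def entryCycle {k : ℕ} (hk : minimalPeriod f (f^[hitTime f v] v) = k) :
    Fin k ↪ α :=
  ⟨fun i => f^[i] (f^[hitTime f v] v), fun i j hij =>
    Fin.ext (iterate_injOn_Iio_minimalPeriod (hk ▸ i.isLt) (hk ▸ j.isLt) hij)⟩

end Defs

@[simp]
theorem entryCycle_apply {f : α → α} {v : α} {k : ℕ}
    (hk : minimalPeriod f (f^[hitTime f v] v) = k) (i : Fin k) :
    entryCycle f v hk i = f^[i] (f^[hitTime f v] v) :=
  rfl

variable {f : α → α} {v : α}

theorem iterate_hitTime_mem_periodicPts : f^[hitTime f v] v ∈ periodicPts f := by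
  classical
  exact Nat.find_spec (exists_iterate_mem_periodicPts f v)

theorem iterate_notMem_periodicPts_of_lt_hitTime {j : ℕ} (hj : j < hitTime f v) :
    f^[j] v ∉ periodicPts f := by
  classical
  exact Nat.find_min (exists_iterate_mem_periodicPts f v) hj

theorem hitTime_eq {m : ℕ} (hm : f^[m] v ∈ periodicPts f)
    (hlt : ∀ j < m, f^[j] v ∉ periodicPts f) : hitTime f v = m := by
  classical
  exact (Nat.find_eq_iff _).2 ⟨hm, hlt⟩

theorem injOn_iterate_Iio_hitTime : InjOn (f^[·] v) (Iio (hitTime f v)) := by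
  intro i hi j hj hij
  by_contra hne
  wlog hlt : i < j generalizing i j
  · exact this hj hi hij.symm (Ne.symm hne) (by omega)
  refine iterate_notMem_periodicPts_of_lt_hitTime hi ⟨j - i, by omega, ?_⟩
  rw [IsPeriodicPt, IsFixedPt, ← iterate_add_apply, Nat.sub_add_cancel hlt.le]
  exact hij.symm

@[simp]
theorem length_tailPath : (tailPath f v).length = hitTime f v := by
  simp [tailPath]

theorem getElem_tailPath {j : ℕ} (hj : j < (tailPath f v).length) :
    (tailPath f v)[j] = f^[hitTime f v - (j + 1)] v := by
  simp [tailPath]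

theorem nodup_tailPath : (tailPath f v).Nodup := by
  refine List.nodup_ofFn.2 fun i j hij => Fin.ext ?_
  have := injOn_iterate_Iio_hitTime (mem_Iio.2 (by omega)) (mem_Iio.2 (by omega)) hij
  omega

theorem notMem_periodicPts_of_mem_tailPath {x : α} (hx : x ∈ tailPath f v) :
    x ∉ periodicPts f := by
  obtain ⟨j, hj, rfl⟩ := List.getElem_of_mem hx
  rw [getElem_tailPath]
  rw [length_tailPath] at hj
  exact iterate_notMem_periodicPts_of_lt_hitTime (by omega)

theorem minimalPeriod_iterate_hitTime {k : ℕ} (hf : IsConnectedEndo f)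
    (hk : Nat.card (periodicPts f) = k) : minimalPeriod f (f^[hitTime f v] v) = k :=
  (hf.card_periodicPts iterate_hitTime_mem_periodicPts).symm.trans hk

theorem range_entryCycle {k : ℕ} (hf : IsConnectedEndo f)
    (hp : minimalPeriod f (f^[hitTime f v] v) = k) :
    range (entryCycle f v hp) = periodicPts f := by
  rw [hf.periodicPts_eq_range (iterate_hitTime_mem_periodicPts (v := v))]
  subst hp
  rfl

variable [DecidableEq α]

theorem detachSpine_of_mem_periodicPts {x : α} (hx : x ∈ periodicPts f) :
    detachSpine f v x = x := by
  rw [detachSpine, if_pos hx]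

theorem detachSpine_of_notMem {x : α} (hx : x ∉ periodicPts f) (hx' : x ∉ tailPath f v) :
    detachSpine f v x = f x := by
  rw [detachSpine, if_neg hx, if_neg hx']

theorem detachSpine_of_mem_tailPath {x : α} (hx : x ∈ tailPath f v) :
    detachSpine f v x = (tailPath f v).arrange x := by
  rw [detachSpine, if_neg (notMem_periodicPts_of_mem_tailPath hx), if_pos hx]

theorem periodicPts_detachSpine :
    periodicPts (detachSpine f v) = periodicPts f ∪ {x | x ∈ tailPath f v} := by
  have on_tail {x : α} (hx : x ∈ tailPath f v) : detachSpine f v x ∈ tailPath f v := by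
    rw [detachSpine_of_mem_tailPath hx]
    exact List.arrange_mem nodup_tailPath hx
  refine periodicPts_eq_of_mapsTo ?_ ?_ fun x => ?_
  · rintro x (hx | hx)
    · exact .inl ((detachSpine_of_mem_periodicPts hx).symm ▸ hx)
    · exact .inr (on_tail hx)
  · rintro x (hx | hx) y (hy | hy) hxy
    · rwa [detachSpine_of_mem_periodicPts hx, detachSpine_of_mem_periodicPts hy] at hxy
    · rw [detachSpine_of_mem_periodicPts hx] at hxy
      exact absurd (hxy ▸ hx) (notMem_periodicPts_of_mem_tailPath (on_tail hy))
    · rw [detachSpine_of_mem_periodicPts hy] at hxy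
      exact absurd (hxy ▸ hy) (notMem_periodicPts_of_mem_tailPath (on_tail hx))
    · rw [detachSpine_of_mem_tailPath hx, detachSpine_of_mem_tailPath hy] at hxy
      exact List.injOn_arrange nodup_tailPath hx hy hxy
  · refine exists_iterate_mem_of_eqOn_compl
      (fun x => (exists_iterate_mem_periodicPts f x).imp fun _ => .inl) (fun x hx => ?_) x
    exact detachSpine_of_notMem (fun h => hx (.inl h)) (fun h => hx (.inr h))

end Detach

section RoundTrip
variable [Fintype α] [DecidableEq α] {k : ℕ}

section AttachDetach
variable [NeZero k]
variable {s : Fin k ↪ α} {g : α → α} (hg : ∀ i, g (s i) = s i)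
include hg

theorem iterate_attachSpine_spineTip {a : ℕ} (ha : a ≤ (spinePath s g).length) :
    (attachSpine s g)^[a] (spineTip s g) =
      (spineChain s g)[(spinePath s g).length - a]'(by simp [spineChain]) := by
  rw [spineTip_eq_getElem]
  exact List.iterate_apply_getElem_of_step (attachSpine_getElem_succ hg) ha
    (by simp [spineChain])

theorem hitTime_attachSpine :
    hitTime (attachSpine s g) (spineTip s g) = (spinePath s g).length := by
  refine hitTime_eq ?_ fun j hj => ?_
  · rw [iterate_attachSpine_spineTip hg le_rfl, periodicPts_attachSpine hg]
    simp [spineChain]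
  · rw [iterate_attachSpine_spineTip hg hj.le, periodicPts_attachSpine hg]
    obtain ⟨i, hi⟩ : ∃ i, (spinePath s g).length - j = i + 1 :=
      ⟨_, (Nat.succ_pred_eq_of_pos (by omega)).symm⟩
    simp only [spineChain, hi, List.getElem_cons_succ]
    exact (mem_spine.1 ((mem_spinePath hg).1 (List.getElem_mem _))).2

theorem tailPath_attachSpine : tailPath (attachSpine s g) (spineTip s g) = spinePath s g :=
  List.ext_getElem (by simp [hitTime_attachSpine hg]) fun j h₁ h₂ => by
    rw [getElem_tailPath, hitTime_attachSpine hg, iterate_attachSpine_spineTip hg (by omega)]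
    have hidx : (spinePath s g).length - ((spinePath s g).length - (j + 1)) = j + 1 := by omega
    simp only [spineChain, hidx, List.getElem_cons_succ]

theorem entryCycle_attachSpine (hp : minimalPeriod (attachSpine s g)
      ((attachSpine s g)^[hitTime (attachSpine s g) (spineTip s g)] (spineTip s g)) = k) :
    entryCycle (attachSpine s g) (spineTip s g) hp = s := by
  ext i
  rw [entryCycle_apply, hitTime_attachSpine hg, iterate_attachSpine_spineTip hg le_rfl]
  simp [spineChain, iterate_attachSpine_cycle, Nat.mod_eq_of_lt i.isLt]

theorem detachSpine_attachSpine : detachSpine (attachSpine s g) (spineTip s g) = g := by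
  funext x
  simp only [detachSpine, tailPath_attachSpine hg, periodicPts_attachSpine hg]
  split_ifs with hs hp
  · obtain ⟨i, rfl⟩ := hs
    exact (hg i).symm
  · refine List.arrange_map_toList ?_ ((mem_spinePath hg).1 hp)
    ext y
    rw [List.mem_toFinset]
    exact mem_spinePath hg
  · refine attachSpine_of_notMem_periodicPts hg fun hper => hp ?_
    exact (mem_spinePath hg).2 (mem_spine.2 ⟨hper, hs⟩)

end AttachDetach
section DetachAttach
variable {f : α → α} {v : α}

variable (hf : IsConnectedEndo f) (hp : minimalPeriod f (f^[hitTime f v] v) = k)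
include hf

theorem detachSpine_entryCycle (i : Fin k) :
    detachSpine f v (entryCycle f v hp i) = entryCycle f v hp i :=
  detachSpine_of_mem_periodicPts (range_entryCycle hf hp ▸ mem_range_self i)

theorem spine_entryCycle :
    spine (entryCycle f v hp) (detachSpine f v) = (tailPath f v).toFinset := by
  ext x
  rw [mem_spine, periodicPts_detachSpine, range_entryCycle hf hp, List.mem_toFinset]
  exact ⟨fun ⟨hx, hxf⟩ => hx.resolve_left hxf,
    fun hx => ⟨.inr hx, notMem_periodicPts_of_mem_tailPath hx⟩⟩

theorem spinePath_entryCycle :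
    spinePath (entryCycle f v hp) (detachSpine f v) = tailPath f v := by
  rw [spinePath, spine_entryCycle hf hp]
  conv_rhs => rw [← List.map_arrange_toList (nodup_tailPath (f := f) (v := v))]
  refine List.map_congr_left fun x hx => detachSpine_of_mem_tailPath ?_
  simpa using hx

variable [NeZero k]

theorem getElem_spineChain_entryCycle {j : ℕ}
    (hj : j < (spineChain (entryCycle f v hp) (detachSpine f v)).length) :
    (spineChain (entryCycle f v hp) (detachSpine f v))[j] = f^[hitTime f v - j] v := by
  cases j with
  | zero => simp [spineChain]
  | succ j => simp [spineChain, spinePath_entryCycle hf hp, getElem_tailPath]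

theorem attachSpine_entryCycle :
    attachSpine (entryCycle f v hp) (detachSpine f v) = f := by
  have hg := detachSpine_entryCycle hf hp
  funext x
  by_cases hx : x ∈ periodicPts f
  · obtain ⟨i, rfl⟩ := (range_entryCycle hf hp).symm ▸ hx
    have hmod := iterate_mod_minimalPeriod_eq (f := f) (x := f^[hitTime f v] v) (n := i + 1)
    rw [hp] at hmod
    rw [attachSpine_apply_cycle, entryCycle_apply, entryCycle_apply, Fin.val_add, Fin.val_one',
      Nat.add_mod_mod, hmod, iterate_succ_apply']
  by_cases hx' : x ∈ tailPath f v
  · obtain ⟨j, hj, rfl⟩ := List.getElem_of_mem hx'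
    have hj' : j + 1 < (spineChain (entryCycle f v hp) (detachSpine f v)).length := by
      simpa [spineChain, spinePath_entryCycle hf hp] using hj
    have step := attachSpine_getElem_succ hg j hj'
    rw [getElem_spineChain_entryCycle hf hp, getElem_spineChain_entryCycle hf hp] at step
    rw [length_tailPath] at hj
    rw [getElem_tailPath, step, ← iterate_succ_apply' f]
    congr 1
    omega
  · rw [attachSpine_of_notMem_periodicPts hg, detachSpine_of_notMem hx hx']
    rw [periodicPts_detachSpine]
    exact fun h => h.elim hx hx'

theorem spineTip_entryCycle : spineTip (entryCycle f v hp) (detachSpine f v) = v := by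
  rw [spineTip_eq_getElem, getElem_spineChain_entryCycle hf hp, spinePath_entryCycle hf hp,
    length_tailPath, Nat.sub_self, iterate_zero_apply]

end DetachAttach

end RoundTrip

section Count
variable [Fintype α]

theorem card_fun_fixing {k : ℕ} (s : Fin k ↪ α) :
    Nat.card {g : α → α // ∀ i, g (s i) = s i} = Fintype.card α ^ (Fintype.card α - k) := by
  classical
  let t : α → Finset α := fun x => if x ∈ range s then {x} else Finset.univ
  have hmem (g : α → α) : (∀ i, g (s i) = s i) ↔ g ∈ Fintype.piFinset t := by
    simp only [Fintype.mem_piFinset, t]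
    refine ⟨fun hg x => ?_, fun hg i => by simpa using hg (s i)⟩
    split_ifs with hx
    · obtain ⟨i, rfl⟩ := hx
      simp [hg i]
    · exact Finset.mem_univ _
  have hrange : Finset.univ.filter (fun x => x ∈ range s) = Finset.univ.map s := by
    ext
    simp
  have hcard (x : α) : (t x).card = if x ∈ range s then 1 else Fintype.card α := by
    simp only [t]
    split_ifs <;> simp
  rw [Nat.card_eq_fintype_card, Fintype.card_subtype, Finset.filter_congr fun g _ => hmem g,
    Finset.filter_mem_eq_inter, Finset.univ_inter, Fintype.card_piFinset,
    Finset.prod_congr rfl fun x _ => hcard x, Finset.prod_ite, Finset.prod_const_one, one_mul,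
    Finset.prod_const, Finset.filter_not, Finset.card_sdiff_of_subset (Finset.filter_subset _ _),
    hrange, Finset.card_map, Finset.card_univ, Finset.card_univ, Fintype.card_fin]

theorem card_embedding_and_fun_fixing (k : ℕ) :
    Nat.card {p : (Fin k ↪ α) × (α → α) // ∀ i, p.2 (p.1 i) = p.1 i} =
      (Fintype.card α).descFactorial k * Fintype.card α ^ (Fintype.card α - k) := by
  classical
  rw [Nat.card_congr (Equiv.subtypeProdEquivSigmaSubtype
      fun (s : Fin k ↪ α) (g : α → α) => ∀ i, g (s i) = s i), Nat.card_sigma,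
    Finset.sum_congr rfl fun s _ => card_fun_fixing s, Finset.sum_const, smul_eq_mul,
    Finset.card_univ, Fintype.card_embedding_eq, Fintype.card_fin]

variable [DecidableEq α] (k : ℕ) [NeZero k]

noncomputable def joyalEquiv :
    {p : (Fin k ↪ α) × (α → α) // ∀ i, p.2 (p.1 i) = p.1 i} ≃
      {f : α → α // IsConnectedEndo f ∧ Nat.card (periodicPts f) = k} × α where
  toFun p := (⟨attachSpine p.1.1 p.1.2, isConnectedEndo_attachSpine p.2,
    card_periodicPts_attachSpine p.2⟩, spineTip p.1.1 p.1.2)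
  invFun q :=
    let hp := minimalPeriod_iterate_hitTime q.1.2.1 q.1.2.2
    ⟨(entryCycle q.1.1 q.2 hp, detachSpine q.1.1 q.2), detachSpine_entryCycle q.1.2.1 hp⟩
  left_inv := by
    rintro ⟨⟨s, g⟩, hg⟩
    refine Subtype.ext (Prod.ext ?_ (detachSpine_attachSpine hg))
    exact entryCycle_attachSpine hg (minimalPeriod_iterate_hitTime
      (isConnectedEndo_attachSpine hg) (card_periodicPts_attachSpine hg))
  right_inv := by
    rintro ⟨⟨f, hf, hk⟩, v⟩
    refine Prod.ext (Subtype.ext ?_) ?_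
    · exact attachSpine_entryCycle hf (minimalPeriod_iterate_hitTime hf hk)
    · exact spineTip_entryCycle hf (minimalPeriod_iterate_hitTime hf hk)

theorem card_isConnectedEndo_mul_card :
    Nat.card {f : α → α // IsConnectedEndo f ∧ Nat.card (periodicPts f) = k} *
        Fintype.card α =
      (Fintype.card α).descFactorial k * Fintype.card α ^ (Fintype.card α - k) := by
  rw [← card_embedding_and_fun_fixing, Nat.card_congr (joyalEquiv k), Nat.card_prod,
    Nat.card_eq_fintype_card (α := α)]

end Count

theorem connFun_and_girth_iff {n k : ℕ} (hk : k ≠ 0) (f : Fin n → Fin n) :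
    ConnFun f ∧ girth f = k ↔ IsConnectedEndo f ∧ Nat.card (periodicPts f) = k := by
  have hgirth : girth f = Nat.card (periodicPts f) := rfl
  simp only [ConnFun, hgirth, eqvGen_iff_exists_iterate_eq]
  refine ⟨fun ⟨⟨_, h⟩, hcard⟩ => ⟨h, hcard⟩, fun ⟨h, hcard⟩ => ⟨⟨?_, h⟩, hcard⟩⟩
  obtain ⟨⟨x, -⟩⟩ := (Nat.card_pos_iff.1 (hcard ▸ Nat.pos_of_ne_zero hk)).1
  exact ⟨x⟩

theorem stmt7_general (n k : ℕ) (hk : 1 ≤ k) :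
    Nat.card {f : Fin n → Fin n // ConnFun f ∧ girth f = k} * n =
      n.descFactorial k * n ^ (n - k) := by
  have : NeZero k := ⟨by omega⟩
  simpa only [connFun_and_girth_iff (NeZero.ne k), Fintype.card_fin] using
    card_isConnectedEndo_mul_card (α := Fin n) k

/-- The number of connected endofunctions on `{1,…,n}` of girth `k` equals
`n(n-1)⋯(n-k+1)·n^(n-k-1)` (stated multiplied through by `n`). -/
theorem stmt7 (n k : ℕ) (hk : 1 ≤ k) (hkn : k ≤ n) :
    Nat.card {f : Fin n → Fin n // ConnFun f ∧ girth f = k} * n =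
      n.descFactorial k * n ^ (n - k) :=
  stmt7_general n k hk
end

section
/- The total number of non-root records over all rooted labeled trees on {1,...,n} equals (1/n) times the sum, over all rooted labeled trees on {1,...,n}, of the total height of all vertices. -/
/-!
Both sides count triples `(f, a, x)` with `a` a non-root vertex of the tree `f`: on the right `a`
lies on the path from `x` to the root (`ht f x` counts the non-root vertices of that path), on the
left `a` is a record and `x` is arbitrary. If `a` is not a record, reverse the path from `a` up to
the largest label `b` above it and hang `a` where `b` hung; then `b` is a record and `x` is no
longer below it. Conversely, from a record `w` and a vertex `x` not below it, reverse the path from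
`w` up to the point where it meets the path from `x`. These two maps are mutually inverse.
-/

open scoped Classical

open Finset

theorem Function.iterate_apply_eq_of_forall_lt {α : Type*} {f g : α → α} {x : α} {N : ℕ}
    (h : ∀ i < N, g (f^[i] x) = f (f^[i] x)) {i : ℕ} (hi : i ≤ N) : g^[i] x = f^[i] x := by
  induction i with
  | zero => rfl
  | succ i ih =>
    rw [Function.iterate_succ_apply', ih (by omega), h i (by omega), Function.iterate_succ_apply']

namespace IsTreeFun

variable {n : ℕ} {f : Fin n → Fin n}

theorem fixedPt_unique (hf : IsTreeFun f) {a b : Fin n} (ha : f a = a) (hb : f b = b) :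
    a = b := by
  obtain ⟨r, -, hr⟩ := hf
  have key : ∀ c, f c = c → c = r := fun c hc => by
    obtain ⟨k, hk⟩ := hr c
    rwa [Function.iterate_fixed hc] at hk
  rw [key a ha, key b hb]

theorem apply_iterate_ht (hf : IsTreeFun f) (v : Fin n) :
    f (f^[ht f v] v) = f^[ht f v] v := by
  obtain ⟨r, hr, hall⟩ := hf
  obtain ⟨k, hk⟩ := hall v
  exact Nat.sInf_mem (s := {m | f (f^[m] v) = f^[m] v})
    ⟨k, show f (f^[k] v) = f^[k] v by rw [hk, hr]⟩

theorem iterate_of_ht_le (hf : IsTreeFun f) {v : Fin n} {k : ℕ} (h : ht f v ≤ k) :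
    f^[k] v = f^[ht f v] v := by
  obtain ⟨s, rfl⟩ := Nat.exists_eq_add_of_le h
  rw [add_comm, Function.iterate_add_apply, Function.iterate_fixed (hf.apply_iterate_ht v)]

theorem ht_le_iff (hf : IsTreeFun f) {v : Fin n} {k : ℕ} :
    ht f v ≤ k ↔ f (f^[k] v) = f^[k] v :=
  ⟨fun h => by rw [hf.iterate_of_ht_le h]; exact hf.apply_iterate_ht v, fun h => Nat.sInf_le h⟩

theorem ht_iterate (hf : IsTreeFun f) (v : Fin n) (j : ℕ) :
    ht f (f^[j] v) = ht f v - j := by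
  have hle : ht f (f^[j] v) ≤ ht f v - j := hf.ht_le_iff.2 <| by
    rw [← Function.iterate_add_apply]
    exact hf.ht_le_iff.1 (by omega)
  have hge : ht f v ≤ ht f (f^[j] v) + j := hf.ht_le_iff.2 <| by
    rw [Function.iterate_add_apply]
    exact hf.apply_iterate_ht _
  omega

theorem ht_pos (hf : IsTreeFun f) {a : Fin n} (ha : f a ≠ a) : 0 < ht f a :=
  Nat.pos_of_ne_zero fun h => ha (by simpa using hf.ht_le_iff.1 h.le)

theorem iterate_injOn (hf : IsTreeFun f) {v : Fin n} {i j : ℕ} (hi : i ≤ ht f v)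
    (hj : j ≤ ht f v) (h : f^[i] v = f^[j] v) : i = j := by
  have := congrArg (ht f) h
  rw [hf.ht_iterate, hf.ht_iterate] at this
  omega

theorem iterate_ne_iterate (hf : IsTreeFun f) {v : Fin n} {i j : ℕ} (hi : i < ht f v)
    (hij : i < j) : f^[i] v ≠ f^[j] v := by
  intro h
  have := congrArg (ht f) h
  rw [hf.ht_iterate, hf.ht_iterate] at this
  omega

theorem iterate_ne_self (hf : IsTreeFun f) {w : Fin n} (hw : f w ≠ w) {k : ℕ} (hk : 0 < k) :
    f^[k] w ≠ w :=
  (hf.iterate_ne_iterate (hf.ht_pos hw) hk).symm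

theorem ht_eq_card_ancestors (hf : IsTreeFun f) (v : Fin n) :
    ht f v = #{w | (∃ k, f^[k] v = w) ∧ f w ≠ w} := by
  have himage : (range (ht f v)).image (fun j => f^[j] v)
      = ({w | (∃ k, f^[k] v = w) ∧ f w ≠ w} : Finset (Fin n)) := by
    ext w
    simp only [mem_image, mem_range, mem_filter, mem_univ, true_and]
    constructor
    · rintro ⟨j, hj, rfl⟩
      exact ⟨⟨j, rfl⟩, fun h => by have := hf.ht_le_iff.2 h; omega⟩
    · rintro ⟨⟨k, rfl⟩, hne⟩
      exact ⟨k, not_le.1 (mt hf.ht_le_iff.1 hne), rfl⟩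
  rw [← himage, card_image_of_injOn, card_range]
  intro i hi j hj hij
  exact hf.iterate_injOn (mem_range.1 hi).le (mem_range.1 hj).le hij

end IsTreeFun

/-- Reverse the path `a, f a, …, f^[m] a`: each `f^[j] a` with `0 < j ≤ m` now points to
`f^[j - 1] a`, and `a` is hung from the old parent of `f^[m] a` (it becomes the root if `f^[m] a`
was the root). -/
noncomputable def reversePath {n : ℕ} (f : Fin n → Fin n) (a : Fin n) (m : ℕ) :
    Fin n → Fin n := fun z =>
  if z = a then (if f (f^[m] a) = f^[m] a then a else f^[m + 1] a)
  else if h : ∃ j, 0 < j ∧ j ≤ m ∧ f^[j] a = z then f^[Nat.find h - 1] a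
  else f z

section reversePath

variable {n : ℕ} {f : Fin n → Fin n} {a : Fin n} {m : ℕ}

theorem reversePath_self :
    reversePath f a m a = if f (f^[m] a) = f^[m] a then a else f^[m + 1] a := by
  simp [reversePath]

theorem reversePath_apply_of_forall_ne {z : Fin n} (hz : ∀ j ≤ m, f^[j] a ≠ z) :
    reversePath f a m z = f z := by
  have hza : z ≠ a := fun h => hz 0 (Nat.zero_le _) (by simpa using h.symm)
  rw [reversePath, if_neg hza, dif_neg]
  rintro ⟨j, -, hjm, hj⟩
  exact hz j hjm hj

end reversePath

namespace IsTreeFun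

variable {n : ℕ} {f : Fin n → Fin n} {a : Fin n} {m : ℕ}

theorem reversePath_iterate (hf : IsTreeFun f) (hm : m ≤ ht f a) {j : ℕ} (hj0 : 0 < j)
    (hjm : j ≤ m) : reversePath f a m (f^[j] a) = f^[j - 1] a := by
  have hex : ∃ i, 0 < i ∧ i ≤ m ∧ f^[i] a = f^[j] a := ⟨j, hj0, hjm, rfl⟩
  have hja : f^[j] a ≠ a := by simpa using hf.iterate_ne_iterate (by omega) hj0 |>.symm
  have hfind : Nat.find hex = j :=
    hf.iterate_injOn ((Nat.find_spec hex).2.1.trans hm) (hjm.trans hm) (Nat.find_spec hex).2.2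
  rw [reversePath, if_neg hja, dif_pos hex, hfind]

theorem iterate_reversePath_iterate (hf : IsTreeFun f) (hm : m ≤ ht f a) {i j : ℕ}
    (hij : i ≤ j) (hjm : j ≤ m) : (reversePath f a m)^[i] (f^[j] a) = f^[j - i] a := by
  induction i with
  | zero => simp
  | succ i ih =>
    rw [Function.iterate_succ_apply', ih (by omega), hf.reversePath_iterate hm (by omega)
      (by omega), show j - i - 1 = j - (i + 1) by omega]

theorem reversePath_self_of_eq_ht (hf : IsTreeFun f) (hm : m = ht f a) :
    reversePath f a m a = a := by
  rw [reversePath_self, if_pos (hm ▸ hf.apply_iterate_ht a)]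

theorem iterate_reversePath_self_of_lt_ht (hf : IsTreeFun f) (hm : m < ht f a) {s : ℕ}
    (hs : 0 < s) : (reversePath f a m)^[s] a = f^[m + s] a := by
  induction s with
  | zero => omega
  | succ s ih =>
    rcases Nat.eq_zero_or_pos s with rfl | hs
    · rw [Function.iterate_one, reversePath_self, if_neg (mt hf.ht_le_iff.2 (by omega))]
    · rw [Function.iterate_succ_apply', ih hs, reversePath_apply_of_forall_ne
        fun j hj => hf.iterate_ne_iterate (by omega) (by omega), ← Function.iterate_succ_apply' f]
      rfl

theorem exists_iterate_reversePath_self (hf : IsTreeFun f) (hm : m ≤ ht f a) (s : ℕ) :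
    ∃ j, (j = 0 ∨ m < j) ∧ j ≤ ht f a ∧ (reversePath f a m)^[s] a = f^[j] a := by
  rcases hm.eq_or_lt with hm | hm
  · exact ⟨0, Or.inl rfl, Nat.zero_le _,
      Function.iterate_fixed (hf.reversePath_self_of_eq_ht hm) s⟩
  rcases Nat.eq_zero_or_pos s with rfl | hs
  · exact ⟨0, Or.inl rfl, Nat.zero_le _, rfl⟩
  refine ⟨min (m + s) (ht f a), Or.inr (by omega), min_le_right _ _, ?_⟩
  rw [hf.iterate_reversePath_self_of_lt_ht hm hs]
  rcases le_total (m + s) (ht f a) with h | h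
  · rw [min_eq_left h]
  · rw [min_eq_right h, hf.iterate_of_ht_le h]

theorem exists_iterate_reversePath_top (hf : IsTreeFun f) (hm : m ≤ ht f a) (k : ℕ) :
    ∃ j, (reversePath f a m)^[k] (f^[m] a) = f^[j] a := by
  rcases le_or_gt k m with hk | hk
  · exact ⟨m - k, hf.iterate_reversePath_iterate hm hk le_rfl⟩
  obtain ⟨j, -, -, hj⟩ := hf.exists_iterate_reversePath_self hm (k - m)
  refine ⟨j, ?_⟩
  rw [← Nat.sub_add_cancel hk.le, Function.iterate_add_apply,
    hf.iterate_reversePath_iterate hm le_rfl le_rfl, Nat.sub_self, Function.iterate_zero_apply, hj]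

/-- Off `S`, `g`-paths follow `f`-paths, which reach `S` or the root of `f`. -/
theorem of_eq_on_compl (hf : IsTreeFun f) {g : Fin n → Fin n} {r : Fin n} {S : Set (Fin n)}
    (hr : g r = r) (hS : ∀ z ∈ S, ∃ k, g^[k] z = r) (hg : ∀ z ∉ S, g z = f z)
    (hroot : ∀ z ∉ S, f z = z → z = r) : IsTreeFun g := by
  refine ⟨r, hr, fun z => ?_⟩
  induction hN : ht f z using Nat.strong_induction_on generalizing z with
  | _ N ih =>
    by_cases hzS : z ∈ S
    · exact hS z hzS
    by_cases hfz : f z = z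
    · exact ⟨0, hroot z hzS hfz⟩
    have hfz_ht : ht f (f z) = N - 1 := by simpa [hN] using hf.ht_iterate z 1
    obtain ⟨k, hk⟩ := ih (N - 1) (by have := hf.ht_pos hfz; omega) (f z) hfz_ht
    exact ⟨k + 1, by rw [Function.iterate_succ_apply, hg z hzS, hk]⟩

theorem isTreeFun_reversePath (hf : IsTreeFun f) (hm : m ≤ ht f a) :
    IsTreeFun (reversePath f a m) := by
  set S : Set (Fin n) := {z | ∃ j ≤ m, f^[j] a = z}
  have hg : ∀ z ∉ S, reversePath f a m z = f z := fun z hz =>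
    reversePath_apply_of_forall_ne fun j hj h => hz ⟨j, hj, h⟩
  have hS : ∀ z ∈ S, ∃ k, (reversePath f a m)^[k] z = a := by
    rintro z ⟨j, hj, rfl⟩
    exact ⟨j, by simpa using hf.iterate_reversePath_iterate hm le_rfl hj⟩
  rcases hm.eq_or_lt with hm | hm
  · refine hf.of_eq_on_compl (hf.reversePath_self_of_eq_ht hm) hS hg fun z hz hfz => ?_
    exact absurd ⟨m, le_rfl, (hf.fixedPt_unique hfz (hm ▸ hf.apply_iterate_ht a)).symm⟩ hz
  · have hroot : f^[ht f a] a ∉ S := by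
      rintro ⟨j, hj, h⟩
      exact hf.iterate_ne_iterate (by omega) (by omega) h
    refine hf.of_eq_on_compl ((hg _ hroot).trans (hf.apply_iterate_ht a)) (fun z hz => ?_) hg
      fun z _ hfz => hf.fixedPt_unique hfz (hf.apply_iterate_ht a)
    obtain ⟨k, hk⟩ := hS z hz
    refine ⟨(ht f a - m) + k, ?_⟩
    rw [Function.iterate_add_apply, hk, hf.iterate_reversePath_self_of_lt_ht hm (by omega),
      Nat.add_sub_cancel' hm.le]

theorem reversePath_top_ne (hf : IsTreeFun f) (hm0 : 0 < m) (hm : m ≤ ht f a) :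
    reversePath f a m (f^[m] a) ≠ f^[m] a := by
  rw [hf.reversePath_iterate hm hm0 le_rfl]
  exact hf.iterate_ne_iterate (by omega) (by omega)

theorem le_ht_reversePath_top (hf : IsTreeFun f) (hm : m ≤ ht f a) :
    m ≤ ht (reversePath f a m) (f^[m] a) := by
  by_contra! h
  have hfix := (hf.isTreeFun_reversePath hm).apply_iterate_ht (f^[m] a)
  rw [hf.iterate_reversePath_iterate hm h.le le_rfl,
    hf.reversePath_iterate hm (by omega) (by omega)] at hfix
  exact hf.iterate_ne_iterate (by omega) (by omega) hfix

theorem reversePath_reversePath (hf : IsTreeFun f) (hm : m ≤ ht f a) (ha : f a ≠ a) :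
    reversePath (reversePath f a m) (f^[m] a) m = f := by
  have hg := hf.isTreeFun_reversePath hm
  have hmg := hf.le_ht_reversePath_top hm
  have hseg : ∀ i ≤ m, (reversePath f a m)^[i] (f^[m] a) = f^[m - i] a := fun i hi =>
    hf.iterate_reversePath_iterate hm hi le_rfl
  have hbot : (reversePath f a m)^[m] (f^[m] a) = a := by simpa using hseg m le_rfl
  funext z
  by_cases hzb : z = f^[m] a
  · subst hzb
    by_cases htop : f (f^[m] a) = f^[m] a
    · rw [reversePath_self, hbot, if_pos (hf.reversePath_self_of_eq_ht
        (le_antisymm hm (hf.ht_le_iff.2 htop))), htop]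
    · have hga : reversePath f a m a = f^[m + 1] a := by rw [reversePath_self, if_neg htop]
      rw [reversePath_self, hbot, if_neg (hga ▸ hf.iterate_ne_self ha (by omega)),
        Function.iterate_succ_apply', hbot, hga, Function.iterate_succ_apply']
  by_cases hz : ∃ j < m, f^[j] a = z
  · obtain ⟨j, hj, rfl⟩ := hz
    have hz : f^[j] a = (reversePath f a m)^[m - j] (f^[m] a) := by
      rw [hseg _ (by omega), Nat.sub_sub_self hj.le]
    nth_rewrite 1 [hz]
    rw [hg.reversePath_iterate hmg (by omega) (by omega), hseg _ (by omega),
      show m - (m - j - 1) = j + 1 by omega, Function.iterate_succ_apply']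
  · have hoff : ∀ j ≤ m, f^[j] a ≠ z := fun j hj h =>
      hj.lt_or_eq.elim (fun hjm => hz ⟨j, hjm, h⟩) (fun hjm => hzb (hjm ▸ h.symm))
    rw [reversePath_apply_of_forall_ne fun i hi => ?_, reversePath_apply_of_forall_ne hoff]
    rw [hseg i hi]
    exact hoff _ (Nat.sub_le m i)

end IsTreeFun

noncomputable def maxIndex {n : ℕ} (f : Fin n → Fin n) (a : Fin n) : ℕ :=
  sInf {j | ∀ k, f^[k] a ≤ f^[j] a}

noncomputable def meetIndex {n : ℕ} (f : Fin n → Fin n) (w x : Fin n) : ℕ :=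
  sInf {j | ∃ k, f^[k] x = f^[j] w}

section indices

variable {n : ℕ} {f : Fin n → Fin n} {a w x : Fin n} {m : ℕ}

theorem maxIndex_eq (hmax : ∀ k, f^[k] a ≤ f^[m] a) (hlt : ∀ j < m, f^[j] a < f^[m] a) :
    maxIndex f a = m :=
  IsLeast.csInf_eq ⟨hmax, fun j hj => not_lt.1 fun hjm => (hlt j hjm).not_ge (hj m)⟩

theorem meetIndex_eq (hmem : ∃ k, f^[k] x = f^[m] w)
    (hlt : ∀ j < m, ¬∃ k, f^[k] x = f^[j] w) : meetIndex f w x = m :=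
  IsLeast.csInf_eq ⟨hmem, fun j hj => not_lt.1 fun hjm => hlt j hjm hj⟩

theorem not_exists_iterate_eq_of_lt_meetIndex {j : ℕ} (hj : j < meetIndex f w x) :
    ¬∃ k, f^[k] x = f^[j] w :=
  Nat.notMem_of_lt_sInf hj

end indices

namespace IsTreeFun

variable {n : ℕ} {f : Fin n → Fin n} {a v w x : Fin n} {m i₀ : ℕ}

theorem maxIndex_spec (hf : IsTreeFun f) (a : Fin n) :
    (∀ k, f^[k] a ≤ f^[maxIndex f a] a) ∧ maxIndex f a ≤ ht f a := by
  obtain ⟨j, hj, hjmax⟩ := exists_max_image (range (ht f a + 1))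
    (fun k => f^[k] a) ⟨0, by simp⟩
  have hjmem : ∀ k, f^[k] a ≤ f^[j] a := fun k => by
    rcases le_or_gt k (ht f a) with hk | hk
    · exact hjmax k (mem_range.2 (by omega))
    · rw [hf.iterate_of_ht_le hk.le]
      exact hjmax _ (mem_range.2 (by omega))
  exact ⟨Nat.sInf_mem (s := {j | ∀ k, f^[k] a ≤ f^[j] a}) ⟨j, hjmem⟩,
    (Nat.sInf_le (s := {j | ∀ k, f^[k] a ≤ f^[j] a}) hjmem).trans (mem_range_succ_iff.1 hj)⟩

theorem maxIndex_pos (hf : IsTreeFun f) (hnr : ¬IsRec f a) : 0 < maxIndex f a :=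
  Nat.pos_of_ne_zero fun h => hnr fun k => by
    simpa [h] using (hf.maxIndex_spec a).1 k

theorem meetIndex_spec (hf : IsTreeFun f) (w x : Fin n) :
    (∃ k, f^[k] x = f^[meetIndex f w x] w) ∧ meetIndex f w x ≤ ht f w := by
  obtain ⟨r, hr, hall⟩ := id hf
  obtain ⟨k, hk⟩ := hall x
  have hroot : ∃ k, f^[k] x = f^[ht f w] w :=
    ⟨k, hk.trans (hf.fixedPt_unique hr (hf.apply_iterate_ht w))⟩
  exact ⟨Nat.sInf_mem (s := {j | ∃ k, f^[k] x = f^[j] w}) ⟨_, hroot⟩, Nat.sInf_le hroot⟩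

theorem le_ht_of_iterate_eq (hf : IsTreeFun f) (ha : f a ≠ a) (hv : f^[i₀] v = a) :
    i₀ ≤ ht f v := by
  by_contra! h
  exact ha (by simpa [hv] using hf.ht_le_iff.1 h.le)

theorem iterate_reversePath_of_iterate_eq (hf : IsTreeFun f) (ha : f a ≠ a)
    (hv : f^[i₀] v = a) {i : ℕ} (hi : i ≤ i₀) : (reversePath f a m)^[i] v = f^[i] v := by
  have hi₀ := hf.le_ht_of_iterate_eq ha hv
  have hhta : ht f a = ht f v - i₀ := hv ▸ hf.ht_iterate v i₀
  refine Function.iterate_apply_eq_of_forall_lt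
    (fun i hi => reversePath_apply_of_forall_ne fun j _ h => ?_) hi
  have := congrArg (ht f) h
  rw [hf.ht_iterate, hf.ht_iterate] at this
  omega

theorem iterate_reversePath_ne_of_iterate_eq (hf : IsTreeFun f) (hm : m ≤ ht f a)
    (ha : f a ≠ a) (hv : f^[i₀] v = a) (k : ℕ) {d : ℕ} (hd0 : 0 < d) (hdm : d ≤ m) :
    (reversePath f a m)^[k] v ≠ f^[d] a := by
  rcases le_or_gt k i₀ with hk | hk
  · have hi₀ := hf.le_ht_of_iterate_eq ha hv
    have hhta : ht f a = ht f v - i₀ := hv ▸ hf.ht_iterate v i₀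
    rw [hf.iterate_reversePath_of_iterate_eq ha hv hk]
    intro h
    have := congrArg (ht f) h
    rw [hf.ht_iterate, hf.ht_iterate] at this
    omega
  · obtain ⟨j, hj, hjht, hjeq⟩ := hf.exists_iterate_reversePath_self hm (k - i₀)
    rw [← Nat.sub_add_cancel hk.le, Function.iterate_add_apply,
      hf.iterate_reversePath_of_iterate_eq ha hv le_rfl, hv, hjeq]
    intro h
    have := hf.iterate_injOn hjht (by omega) h
    omega

theorem meetIndex_reversePath (hf : IsTreeFun f) (hm : m ≤ ht f a)
    (ha : f a ≠ a) (hv : f^[i₀] v = a) :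
    meetIndex (reversePath f a m) (f^[m] a) v = m := by
  refine meetIndex_eq ⟨i₀, ?_⟩ fun j hj ⟨k, hk⟩ => ?_
  · rw [hf.iterate_reversePath_of_iterate_eq ha hv le_rfl, hv,
      hf.iterate_reversePath_iterate hm le_rfl le_rfl, Nat.sub_self, Function.iterate_zero_apply]
  · exact hf.iterate_reversePath_ne_of_iterate_eq hm ha hv k (d := m - j) (by omega) (by omega)
      (hk.trans (hf.iterate_reversePath_iterate hm hj.le le_rfl))

theorem isRec_reversePath_maxIndex (hf : IsTreeFun f) :
    IsRec (reversePath f a (maxIndex f a)) (f^[maxIndex f a] a) := fun k => by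
  obtain ⟨hmax, hm⟩ := hf.maxIndex_spec a
  obtain ⟨j, hj⟩ := hf.exists_iterate_reversePath_top hm k
  rw [hj]
  exact hmax j

theorem not_isRec_reversePath_top (hf : IsTreeFun f) (hw : f w ≠ w) (hrec : IsRec f w)
    (hm0 : 0 < m) (hm : m ≤ ht f w) : ¬IsRec (reversePath f w m) (f^[m] w) := fun h => by
  have hle := h m
  rw [hf.iterate_reversePath_iterate hm le_rfl le_rfl, Nat.sub_self,
    Function.iterate_zero_apply] at hle
  exact hf.iterate_ne_self hw hm0 (le_antisymm (hrec m) hle)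

theorem maxIndex_reversePath_top (hf : IsTreeFun f) (hw : f w ≠ w) (hrec : IsRec f w)
    (hm : m ≤ ht f w) : maxIndex (reversePath f w m) (f^[m] w) = m := by
  have hbot : (reversePath f w m)^[m] (f^[m] w) = w := by
    simpa using hf.iterate_reversePath_iterate hm le_rfl le_rfl
  refine maxIndex_eq (fun k => ?_) (fun j hj => ?_) <;> rw [hbot]
  · obtain ⟨j, hj⟩ := hf.exists_iterate_reversePath_top hm k
    rw [hj]
    exact hrec j
  · rw [hf.iterate_reversePath_iterate hm hj.le le_rfl]
    exact (hrec _).lt_of_ne (hf.iterate_ne_self hw (by omega))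

theorem meetIndex_pos (hf : IsTreeFun f) (hx : ¬∃ k, f^[k] x = w) : 0 < meetIndex f w x :=
  Nat.pos_of_ne_zero fun h => hx <| by
    simpa [h] using (hf.meetIndex_spec w x).1

theorem exists_iterate_reversePath_meetIndex (hf : IsTreeFun f) (w x : Fin n) :
    ∃ k, (reversePath f w (meetIndex f w x))^[k] x = f^[meetIndex f w x] w := by
  obtain ⟨hmem, -⟩ := hf.meetIndex_spec w x
  have hpre : (reversePath f w (meetIndex f w x))^[Nat.find hmem] x = f^[Nat.find hmem] x := by
    refine Function.iterate_apply_eq_of_forall_lt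
      (fun i hi => reversePath_apply_of_forall_ne fun j hj h => ?_) le_rfl
    rcases hj.lt_or_eq with hj | rfl
    · exact not_exists_iterate_eq_of_lt_meetIndex hj ⟨i, h.symm⟩
    · exact Nat.find_min hmem hi h.symm
  exact ⟨Nat.find hmem, hpre.trans (Nat.find_spec hmem)⟩

end IsTreeFun

theorem card_filter_prod {α β : Type*} [Fintype α] [Fintype β] (P : α → Prop)
    (Q : α → β → Prop) [DecidablePred P] [∀ a, DecidablePred (Q a)] :
    #{q : α × β | P q.1 ∧ Q q.1 q.2} = ∑ a with P a, #{b | Q a b} := by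
  simp only [card_filter, Fintype.sum_prod_type, sum_filter, ite_and]
  exact sum_congr rfl fun a _ => by split_ifs <;> simp

theorem card_filter_fst {α β : Type*} [Fintype α] [Fintype β] (P : α → Prop)
    [DecidablePred P] :
    #{q : α × β | P q.1} = Nat.card {a // P a} * Fintype.card β := by
  rw [Nat.card_eq_fintype_card, Fintype.card_subtype, ← card_univ, ← card_product,
    ← filter_product_left, univ_product_univ]

theorem IsTreeFun.sum_ht_eq_card {n : ℕ} {f : Fin n → Fin n} (hf : IsTreeFun f) :
    ∑ v, ht f v = #{p : Fin n × Fin n | (∃ k, f^[k] p.2 = p.1) ∧ f p.1 ≠ p.1} := by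
  simp only [hf.ht_eq_card_ancestors, card_filter, Fintype.sum_prod_type_right]

noncomputable def ancestorTriples (n : ℕ) : Finset ((Fin n → Fin n) × Fin n × Fin n) :=
  {q | IsTreeFun q.1 ∧ (∃ k, q.1^[k] q.2.2 = q.2.1) ∧ q.1 q.2.1 ≠ q.2.1}

noncomputable def recordTriples (n : ℕ) : Finset ((Fin n → Fin n) × Fin n × Fin n) :=
  {q | IsTreeFun q.1 ∧ IsRec q.1 q.2.1 ∧ q.1 q.2.1 ≠ q.2.1}

section bijection

variable {n : ℕ}

noncomputable def toRecord :
    (Fin n → Fin n) × Fin n × Fin n → (Fin n → Fin n) × Fin n × Fin n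
  | (f, a, x) => if IsRec f a then (f, a, x)
      else (reversePath f a (maxIndex f a), f^[maxIndex f a] a, x)

noncomputable def ofRecord :
    (Fin n → Fin n) × Fin n × Fin n → (Fin n → Fin n) × Fin n × Fin n
  | (f, w, x) => if ∃ k, f^[k] x = w then (f, w, x)
      else (reversePath f w (meetIndex f w x), f^[meetIndex f w x] w, x)

theorem mapsTo_toRecord :
    Set.MapsTo (toRecord (n := n)) ↑(ancestorTriples n) ↑(recordTriples n) := by
  rintro ⟨f, a, x⟩ h
  simp only [ancestorTriples, recordTriples, mem_coe, mem_filter, mem_univ,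
    true_and] at h ⊢
  obtain ⟨hf, ⟨i₀, hx⟩, ha⟩ := h
  obtain ⟨-, hm⟩ := hf.maxIndex_spec a
  by_cases hr : IsRec f a
  · simpa [toRecord, hr] using ⟨hf, ha⟩
  · simpa [toRecord, hr] using ⟨hf.isTreeFun_reversePath hm, hf.isRec_reversePath_maxIndex,
      hf.reversePath_top_ne (hf.maxIndex_pos hr) hm⟩

theorem mapsTo_ofRecord :
    Set.MapsTo (ofRecord (n := n)) ↑(recordTriples n) ↑(ancestorTriples n) := by
  rintro ⟨f, w, x⟩ h
  simp only [ancestorTriples, recordTriples, mem_coe, mem_filter, mem_univ,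
    true_and] at h ⊢
  obtain ⟨hf, hrec, hw⟩ := h
  obtain ⟨-, hm⟩ := hf.meetIndex_spec w x
  by_cases hx : ∃ k, f^[k] x = w
  · simpa [ofRecord, hx] using ⟨hf, hw⟩
  · simpa [ofRecord, hx] using ⟨hf.isTreeFun_reversePath hm,
      hf.exists_iterate_reversePath_meetIndex w x, hf.reversePath_top_ne (hf.meetIndex_pos hx) hm⟩

theorem leftInvOn_ofRecord_toRecord :
    Set.LeftInvOn (ofRecord (n := n)) toRecord ↑(ancestorTriples n) := by
  rintro ⟨f, a, x⟩ h
  simp only [ancestorTriples, mem_coe, mem_filter, mem_univ, true_and] at h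
  obtain ⟨hf, ⟨i₀, hx⟩, ha⟩ := h
  obtain ⟨-, hm⟩ := hf.maxIndex_spec a
  by_cases hr : IsRec f a
  · simp [toRecord, ofRecord, hr, show ∃ k, f^[k] x = a from ⟨i₀, hx⟩]
  have hx' : ¬∃ k, (reversePath f a (maxIndex f a))^[k] x = f^[maxIndex f a] a :=
    fun ⟨k, hk⟩ =>
      hf.iterate_reversePath_ne_of_iterate_eq hm ha hx k (hf.maxIndex_pos hr) le_rfl hk
  simp only [toRecord, ofRecord, hr, if_false, hx', hf.meetIndex_reversePath hm ha hx,
    hf.reversePath_reversePath hm ha, hf.iterate_reversePath_iterate hm le_rfl le_rfl,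
    Nat.sub_self, Function.iterate_zero_apply]

theorem rightInvOn_ofRecord_toRecord :
    Set.RightInvOn (ofRecord (n := n)) toRecord ↑(recordTriples n) := by
  rintro ⟨f, w, x⟩ h
  simp only [recordTriples, mem_coe, mem_filter, mem_univ, true_and] at h
  obtain ⟨hf, hrec, hw⟩ := h
  obtain ⟨-, hm⟩ := hf.meetIndex_spec w x
  by_cases hx : ∃ k, f^[k] x = w
  · simp [toRecord, ofRecord, hrec, hx]
  simp only [toRecord, ofRecord, hx, if_false,
    hf.not_isRec_reversePath_top hw hrec (hf.meetIndex_pos hx) hm,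
    hf.maxIndex_reversePath_top hw hrec hm, hf.reversePath_reversePath hm hw,
    hf.iterate_reversePath_iterate hm le_rfl le_rfl, Nat.sub_self, Function.iterate_zero_apply]

theorem card_ancestorTriples : #(ancestorTriples n) = #(recordTriples n) :=
  card_nbij' toRecord ofRecord mapsTo_toRecord mapsTo_ofRecord leftInvOn_ofRecord_toRecord
    rightInvOn_ofRecord_toRecord

end bijection

/-- The total number of non-root records over all rooted labeled trees on
`{1,…,n}` equals `1/n` times the total height summed over all such trees
(stated multiplied through by `n`). -/
theorem stmt10 (n : ℕ) :
    n * ∑ f ∈ Finset.univ.filter (fun f : Fin n → Fin n => IsTreeFun f),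
          Nat.card {v : Fin n // IsRec f v ∧ f v ≠ v} =
      ∑ f ∈ Finset.univ.filter (fun f : Fin n → Fin n => IsTreeFun f),
          ∑ v : Fin n, ht f v := by
  calc n * ∑ f with IsTreeFun f, Nat.card {v : Fin n // IsRec f v ∧ f v ≠ v}
      = ∑ f with IsTreeFun f, #{p : Fin n × Fin n | IsRec f p.1 ∧ f p.1 ≠ p.1} := by
        rw [mul_sum]
        refine sum_congr rfl fun f _ => ?_
        rw [card_filter_fst (fun v => IsRec f v ∧ f v ≠ v), Fintype.card_fin, mul_comm]
    _ = #(recordTriples n) := by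
        rw [recordTriples]
        exact (card_filter_prod IsTreeFun
          fun f (p : Fin n × Fin n) => IsRec f p.1 ∧ f p.1 ≠ p.1).symm
    _ = #(ancestorTriples n) := card_ancestorTriples.symm
    _ = ∑ f with IsTreeFun f,
          #{p : Fin n × Fin n | (∃ k, f^[k] p.2 = p.1) ∧ f p.1 ≠ p.1} := by
        rw [ancestorTriples]
        exact card_filter_prod IsTreeFun
          fun f (p : Fin n × Fin n) => (∃ k, f^[k] p.2 = p.1) ∧ f p.1 ≠ p.1
    _ = ∑ f with IsTreeFun f, ∑ v, ht f v :=
        sum_congr rfl fun f hf => (mem_filter.1 hf).2.sum_ht_eq_card.symm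
end
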